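/- arXiv:2604.16681 — 11 statements merged into one kernel-verified Lean document; each statement's English description precedes it below -/
import Mathlib

section
/- With the notation below, the Dirac element satisfies the identity 𝒟 = −(1/4) · Σ_{i=1}^{n} ( ε_i · Θ(e^i ∧ de^i) + 2 · Θ(ι_{e_i} de^i) ) in Cl(𝔤,g), where ι_{e_i} de^i denotes the one-form de^i(e_i, ·) and e^i ∧ de^i the three-form obtained by wedging. -/
/-!
STATEMENT 0: With the notation below, the Dirac element satisfies
𝒟 = −(1/4) · Σ_{i=1}^{n} ( ε_i · Θ(e^i ∧ de^i) + 2 · Θ(ι_{e_i} de^i) ) in Cl(𝔤,g).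
-/

noncomputable section

open Finset

variable {n : ℕ} {𝔤 : Type} [LieRing 𝔤] [LieAlgebra ℝ 𝔤]

/-- The pseudo-Riemannian metric `g` on `𝔤` for which the basis `e` is orthonormal with
signs `ε` : `g(eᵢ,eⱼ) = εᵢ δᵢⱼ`. -/
def gform (e : Module.Basis (Fin n) ℝ 𝔤) (ε : Fin n → ℝ) : LinearMap.BilinForm ℝ 𝔤 :=
  ∑ i, ε i • LinearMap.BilinForm.linMulLin (e.coord i) (e.coord i)

/-- The quadratic form `x ↦ −g(x,x)` defining the Clifford algebra `Cl(𝔤,g)` with relations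
`x·y + y·x = −2 g(x,y)`. -/
def Qform (e : Module.Basis (Fin n) ℝ 𝔤) (ε : Fin n → ℝ) : QuadraticForm ℝ 𝔤 :=
  LinearMap.BilinMap.toQuadraticMap (-(gform e ε))

/-- `Θ` applied to a one-form with components `α i = α(eᵢ)`:
`Θ(α) = Σᵢ εᵢ α(eᵢ) eᵢ` in `Cl(𝔤,g)`. -/
def theta1 (e : Module.Basis (Fin n) ℝ 𝔤) (ε : Fin n → ℝ) (α : Fin n → ℝ) :
    CliffordAlgebra (Qform e ε) :=
  ∑ i, (ε i * α i) • CliffordAlgebra.ι (Qform e ε) (e i)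

/-- `Θ` applied to a three-form with components `α i j k = α(eᵢ,eⱼ,e_k)`:
`Θ(α) = Σ_{i<j<k} εᵢεⱼε_k α(eᵢ,eⱼ,e_k) eᵢeⱼe_k` in `Cl(𝔤,g)`. -/
def theta3 (e : Module.Basis (Fin n) ℝ 𝔤) (ε : Fin n → ℝ) (α : Fin n → Fin n → Fin n → ℝ) :
    CliffordAlgebra (Qform e ε) :=
  ∑ i, ∑ j, ∑ k,
    if i < j ∧ j < k then
      (ε i * ε j * ε k * α i j k) •
        (CliffordAlgebra.ι (Qform e ε) (e i) * CliffordAlgebra.ι (Qform e ε) (e j) *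
          CliffordAlgebra.ι (Qform e ε) (e k))
    else 0

/-- Levi-Civita coefficients `Γ_{kij} = (1/2)(ε_j c^j_{ki} − ε_k c^k_{ij} + ε_i c^i_{jk})`
coming from the Koszul formula, where `c m a b = c^m_{ab}` are the structure constants. -/
def Γcoef (ε : Fin n → ℝ) (c : Fin n → Fin n → Fin n → ℝ) (k i j : Fin n) : ℝ :=
  (1 / 2) * (ε j * c j k i - ε k * c k i j + ε i * c i j k)

/-- The Dirac element
`𝒟 = Σ_k ε_k e_k · ((1/2) Σ_{i<j} ε_i ε_j Γ_{kij} e_i e_j)` in `Cl(𝔤,g)`. -/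
def dirac (e : Module.Basis (Fin n) ℝ 𝔤) (ε : Fin n → ℝ) (c : Fin n → Fin n → Fin n → ℝ) :
    CliffordAlgebra (Qform e ε) :=
  ∑ k, ε k •
    (CliffordAlgebra.ι (Qform e ε) (e k) *
      ((1 / 2 : ℝ) • ∑ i, ∑ j,
        if i < j then
          (ε i * ε j * Γcoef ε c k i j) •
            (CliffordAlgebra.ι (Qform e ε) (e i) * CliffordAlgebra.ι (Qform e ε) (e j))
        else 0))

/-- Components of `de^i`: `de^i(e_a,e_b) = −e^i([e_a,e_b]) = −c^i_{ab}`. -/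
def deComp (c : Fin n → Fin n → Fin n → ℝ) (i a b : Fin n) : ℝ := -c i a b

/-- Components of the coframe covector `e^i`: `e^i(e_a) = δᵢₐ`. -/
def coComp (i a : Fin n) : ℝ := if a = i then 1 else 0

/-- Components of the three-form `e^i ∧ de^i`. -/
def wedgeDeComp (c : Fin n → Fin n → Fin n → ℝ) (i a b k : Fin n) : ℝ :=
  coComp i a * deComp c i b k - coComp i b * deComp c i a k + coComp i k * deComp c i a b

lemma gform_apply (e : Module.Basis (Fin n) ℝ 𝔤) (ε : Fin n → ℝ) (i j : Fin n) :
    gform e ε (e i) (e j) = if i = j then ε i else 0 := by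
  simp [gform, LinearMap.BilinForm.linMulLin, Module.Basis.coord_apply, Module.Basis.repr_self,
    Finsupp.single_apply, mul_ite, ite_and]
  split <;> simp_all

lemma Qform_apply (e : Module.Basis (Fin n) ℝ 𝔤) (ε : Fin n → ℝ) (k : Fin n) :
    Qform e ε (e k) = -ε k := by
  simp [Qform, LinearMap.BilinMap.toQuadraticMap_apply, gform_apply]

lemma polar_Qform (e : Module.Basis (Fin n) ℝ 𝔤) (ε : Fin n → ℝ) {i j : Fin n} (h : i ≠ j) :
    QuadraticMap.polar (⇑(Qform e ε)) (e i) (e j) = 0 := by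
  rw [Qform]
  rw [LinearMap.BilinMap.polar_toQuadraticMap]
  simp [gform_apply, h, h.symm]

def EE (e : Module.Basis (Fin n) ℝ 𝔤) (ε : Fin n → ℝ) (i : Fin n) : CliffordAlgebra (Qform e ε) :=
  CliffordAlgebra.ι (Qform e ε) (e i)

lemma EE_sq (e : Module.Basis (Fin n) ℝ 𝔤) (ε : Fin n → ℝ) (k : Fin n) :
    EE e ε k * EE e ε k = algebraMap ℝ _ (-ε k) := by
  rw [EE, CliffordAlgebra.ι_sq_scalar, Qform_apply]

lemma EE_anticomm (e : Module.Basis (Fin n) ℝ 𝔤) (ε : Fin n → ℝ) {i j : Fin n} (h : i ≠ j) :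
    EE e ε i * EE e ε j = -(EE e ε j * EE e ε i) := by
  have := CliffordAlgebra.ι_mul_ι_add_swap (Q := Qform e ε) (e i) (e j)
  rw [polar_Qform e ε h] at this
  simp only [map_zero] at this
  rw [EE, EE]
  linear_combination (norm := abel) this

lemma c_antisymm (e : Module.Basis (Fin n) ℝ 𝔤) (c : Fin n → Fin n → Fin n → ℝ)
    (hc : ∀ a b, ⁅e a, e b⁆ = ∑ m, c m a b • e m) (m a b : Fin n) :
    c m a b = -c m b a := by
  have h : (∑ k, c k a b • e k) = -∑ k, c k b a • e k := by
    rw [← hc a b, ← hc b a, ← lie_skew]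
  have h2 : e.repr (∑ k, c k a b • e k) m = -(e.repr (∑ k, c k b a • e k) m) := by
    rw [h, map_neg]; rfl
  rwa [show (e.repr (∑ k, c k a b • e k)) m = c m a b from congrFun (e.repr_sum_self _) m,
    show (e.repr (∑ k, c k b a • e k)) m = c m b a from congrFun (e.repr_sum_self _) m] at h2

lemma EE_rot (e : Module.Basis (Fin n) ℝ 𝔤) (ε : Fin n → ℝ) {k i j : Fin n}
    (hki : k ≠ i) (hkj : k ≠ j) :
    EE e ε k * EE e ε i * EE e ε j = EE e ε i * EE e ε j * EE e ε k := by
  calc EE e ε k * EE e ε i * EE e ε j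
      = -(EE e ε i * EE e ε k) * EE e ε j := by rw [EE_anticomm e ε hki]
    _ = -(EE e ε i * (EE e ε k * EE e ε j)) := by rw [neg_mul, mul_assoc]
    _ = -(EE e ε i * -(EE e ε j * EE e ε k)) := by rw [EE_anticomm e ε hkj]
    _ = EE e ε i * (EE e ε j * EE e ε k) := by rw [mul_neg, neg_neg]
    _ = EE e ε i * EE e ε j * EE e ε k := (mul_assoc _ _ _).symm

lemma expand (e : Module.Basis (Fin n) ℝ 𝔤) (ε : Fin n → ℝ) (k i j : Fin n) (r : ℝ) :
    (if i < j then r else 0) • (EE e ε k * EE e ε i * EE e ε j) =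
      (if k < i ∧ i < j then r • (EE e ε k * EE e ε i * EE e ε j) else 0)
    + (if i < k ∧ k < j then (-r) • (EE e ε i * EE e ε k * EE e ε j) else 0)
    + (if i < j ∧ j < k then r • (EE e ε i * EE e ε j * EE e ε k) else 0)
    + (if k = i ∧ i < j then ((-ε i) * r) • EE e ε j else 0)
    + (if k = j ∧ i < j then (ε j * r) • EE e ε i else 0) := by
  by_cases hij : i < j
  · rcases lt_trichotomy k i with h | h | h
    · have A1 : ¬(i < k) := by omega
      have A2 : k ≠ i := by omega
      have A3 : k ≠ j := by omega
      have A4 : ¬(j < k) := by omega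
      simp [hij, h, A1, A2, A3, A4]
    · subst h
      have A1 : ¬(k < k) := by omega
      have A2 : k ≠ j := by omega
      have A4 : ¬(j < k) := by omega
      simp only [hij, A1, A2, A4, false_and, and_false, and_true, true_and, and_self,
        if_true, if_false, zero_add, add_zero, ite_self, eq_self_iff_true]
      rw [EE_sq e ε k, ← Algebra.smul_def, smul_smul]
      congr 1
      ring
    · rcases lt_trichotomy k j with h' | h' | h'
      · have A1 : ¬(k < i) := by omega
        have A2 : ¬(j < k) := by omega
        have A3 : k ≠ i := by omega
        have A4 : k ≠ j := by omega
        simp only [hij, h, h', A1, A2, A3, A4, false_and, and_false, and_true, true_and,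
          and_self, if_true, if_false, zero_add, add_zero]
        rw [EE_anticomm e ε (A3 : k ≠ i), neg_mul, smul_neg, ← neg_smul]
      · subst h'
        have A1 : ¬(k < i) := by omega
        have A3 : ¬(k < k) := by omega
        have A4 : k ≠ i := by omega
        simp only [hij, h, A1, A3, A4, false_and, and_false, and_true, true_and, and_self,
          if_true, if_false, zero_add, add_zero, eq_self_iff_true]
        rw [EE_anticomm e ε (A4 : k ≠ i), neg_mul, mul_assoc, EE_sq e ε k,
          ← Algebra.commutes, ← Algebra.smul_def, smul_neg, smul_smul, ← neg_smul]
        congr 1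
        ring
      · have A1 : ¬(k < i) := by omega
        have A2 : ¬(k < j) := by omega
        have A3 : k ≠ i := by omega
        have A4 : k ≠ j := by omega
        simp only [hij, h, h', A1, A2, A3, A4, false_and, and_false, and_true, true_and,
          and_self, if_true, if_false, zero_add, add_zero]
        rw [EE_rot e ε A3 A4]
  · have h2 : ¬(i < k ∧ k < j) := by omega
    simp [hij, h2]

/-- `Θ` applied to a one-form with components `α i = α(eᵢ)`:
`Θ(α) = Σᵢ εᵢ α(eᵢ) eᵢ` in `Cl(𝔤,g)`. -/

def Bc (ε : Fin n → ℝ) (c : Fin n → Fin n → Fin n → ℝ) (k i j : Fin n) : ℝ :=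
  ε k * (1 / 2 * (ε i * ε j * Γcoef ε c k i j))

lemma dirac_expand (e : Module.Basis (Fin n) ℝ 𝔤) (ε : Fin n → ℝ) (c : Fin n → Fin n → Fin n → ℝ) :
    dirac e ε c = ∑ k, ∑ i, ∑ j,
      (if i < j then Bc ε c k i j else 0) • (EE e ε k * EE e ε i * EE e ε j) := by
  unfold dirac Bc EE
  simp only [Finset.smul_sum, Finset.mul_sum, Algebra.mul_smul_comm, smul_ite, mul_ite,
    mul_zero, smul_zero, smul_smul, ite_smul, zero_smul, mul_assoc]

lemma lhs_canon (e : Module.Basis (Fin n) ℝ 𝔤) (ε : Fin n → ℝ) (c : Fin n → Fin n → Fin n → ℝ) :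
    dirac e ε c =
      (∑ a, ∑ b, ∑ d, if a < b ∧ b < d then
          (Bc ε c a b d - Bc ε c b a d + Bc ε c d a b) • (EE e ε a * EE e ε b * EE e ε d)
        else 0)
      + ∑ a, ((∑ i, if i < a then (-ε i) * Bc ε c i i a else 0)
           + (∑ j, if a < j then ε j * Bc ε c j a j else 0)) • EE e ε a := by
  rw [dirac_expand]
  calc
    (∑ k, ∑ i, ∑ j, (if i < j then Bc ε c k i j else 0) • (EE e ε k * EE e ε i * EE e ε j))
      = ∑ k, ∑ i, ∑ j,
        ((if k < i ∧ i < j then Bc ε c k i j • (EE e ε k * EE e ε i * EE e ε j) else 0)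
        + (if i < k ∧ k < j then (-Bc ε c k i j) • (EE e ε i * EE e ε k * EE e ε j) else 0)
        + (if i < j ∧ j < k then Bc ε c k i j • (EE e ε i * EE e ε j * EE e ε k) else 0)
        + (if k = i ∧ i < j then ((-ε i) * Bc ε c k i j) • EE e ε j else 0)
        + (if k = j ∧ i < j then (ε j * Bc ε c k i j) • EE e ε i else 0)) := by
        exact Finset.sum_congr rfl fun k _ => Finset.sum_congr rfl fun i _ =>
          Finset.sum_congr rfl fun j _ => expand e ε k i j _
    _ = (∑ k, ∑ i, ∑ j, if k < i ∧ i < j then Bc ε c k i j • (EE e ε k * EE e ε i * EE e ε j) else 0)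
      + (∑ k, ∑ i, ∑ j, if i < k ∧ k < j then (-Bc ε c k i j) • (EE e ε i * EE e ε k * EE e ε j) else 0)
      + (∑ k, ∑ i, ∑ j, if i < j ∧ j < k then Bc ε c k i j • (EE e ε i * EE e ε j * EE e ε k) else 0)
      + (∑ k, ∑ i, ∑ j, if k = i ∧ i < j then ((-ε i) * Bc ε c k i j) • EE e ε j else 0)
      + (∑ k, ∑ i, ∑ j, if k = j ∧ i < j then (ε j * Bc ε c k i j) • EE e ε i else 0) := by
        simp only [Finset.sum_add_distrib]
    _ = (∑ a, ∑ b, ∑ d, if a < b ∧ b < d then Bc ε c a b d • (EE e ε a * EE e ε b * EE e ε d) else 0)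
      + (∑ a, ∑ b, ∑ d, if a < b ∧ b < d then (-Bc ε c b a d) • (EE e ε a * EE e ε b * EE e ε d) else 0)
      + (∑ a, ∑ b, ∑ d, if a < b ∧ b < d then Bc ε c d a b • (EE e ε a * EE e ε b * EE e ε d) else 0)
      + (∑ a, (∑ i, if i < a then (-ε i) * Bc ε c i i a else 0) • EE e ε a)
      + (∑ a, (∑ j, if a < j then ε j * Bc ε c j a j else 0) • EE e ε a) := by
        congr 1
        congr 1
        congr 1
        · congr 1
          · exact Finset.sum_comm
        · -- S3 : ∑k∑i∑j → ∑i∑j∑k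
          rw [Finset.sum_comm]
          exact Finset.sum_congr rfl fun i _ => Finset.sum_comm
        · -- S4
          rw [Finset.sum_comm]
          have h1 : ∀ i : Fin n, (∑ k, ∑ j, if k = i ∧ i < j then ((-ε i) * Bc ε c k i j) • EE e ε j else 0)
              = ∑ j, if i < j then ((-ε i) * Bc ε c i i j) • EE e ε j else 0 := by
            intro i
            rw [Finset.sum_comm]
            refine Finset.sum_congr rfl fun j _ => ?_
            simp only [ite_and]
            rw [Finset.sum_ite_eq']
            simp
          rw [Finset.sum_congr rfl fun i _ => h1 i]
          rw [Finset.sum_comm]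
          refine Finset.sum_congr rfl fun a _ => ?_
          rw [Finset.sum_smul]
          exact Finset.sum_congr rfl fun i _ => by simp [ite_smul]
        · -- S5
          have h1 : ∀ i j : Fin n, (∑ k, if k = j ∧ i < j then (ε j * Bc ε c k i j) • EE e ε i else 0)
              = if i < j then (ε j * Bc ε c j i j) • EE e ε i else 0 := by
            intro i j
            simp only [ite_and]
            rw [Finset.sum_ite_eq']
            simp
          rw [Finset.sum_comm]
          refine Finset.sum_congr rfl fun a _ => ?_
          rw [Finset.sum_comm]
          rw [Finset.sum_congr rfl fun j _ => h1 a j]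
          rw [Finset.sum_smul]
          exact Finset.sum_congr rfl fun j _ => by simp [ite_smul]
    _ = (∑ a, ∑ b, ∑ d, if a < b ∧ b < d then
          (Bc ε c a b d - Bc ε c b a d + Bc ε c d a b) • (EE e ε a * EE e ε b * EE e ε d)
        else 0)
      + ∑ a, ((∑ i, if i < a then (-ε i) * Bc ε c i i a else 0)
           + (∑ j, if a < j then ε j * Bc ε c j a j else 0)) • EE e ε a := by
        have G1 : (∑ a, ∑ b, ∑ d, if a < b ∧ b < d then Bc ε c a b d • (EE e ε a * EE e ε b * EE e ε d) else 0)
            + (∑ a, ∑ b, ∑ d, if a < b ∧ b < d then (-Bc ε c b a d) • (EE e ε a * EE e ε b * EE e ε d) else 0)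
            + (∑ a, ∑ b, ∑ d, if a < b ∧ b < d then Bc ε c d a b • (EE e ε a * EE e ε b * EE e ε d) else 0)
            = (∑ a, ∑ b, ∑ d, if a < b ∧ b < d then
                (Bc ε c a b d - Bc ε c b a d + Bc ε c d a b) • (EE e ε a * EE e ε b * EE e ε d)
              else 0) := by
          simp only [← Finset.sum_add_distrib]
          refine Finset.sum_congr rfl fun a _ => Finset.sum_congr rfl fun b _ =>
            Finset.sum_congr rfl fun d _ => ?_
          split_ifs with h
          · rw [← add_smul, ← add_smul, ← sub_eq_add_neg]
          · simp
        have G2 : (∑ a, (∑ i, if i < a then (-ε i) * Bc ε c i i a else 0) • EE e ε a)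
            + (∑ a, (∑ j, if a < j then ε j * Bc ε c j a j else 0) • EE e ε a)
            = ∑ a, ((∑ i, if i < a then (-ε i) * Bc ε c i i a else 0)
               + (∑ j, if a < j then ε j * Bc ε c j a j else 0)) • EE e ε a := by
          rw [← Finset.sum_add_distrib]
          exact Finset.sum_congr rfl fun a _ => (add_smul _ _ _).symm
        rw [← G1, ← G2]
        abel

lemma rhs_canon (e : Module.Basis (Fin n) ℝ 𝔤) (ε : Fin n → ℝ) (c : Fin n → Fin n → Fin n → ℝ) :
    ((-(1 / 4 : ℝ)) • ∑ i,
        (ε i • theta3 e ε (wedgeDeComp c i) + (2 : ℝ) • theta1 e ε (fun a => deComp c i i a)))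
    = (∑ a, ∑ b, ∑ d, if a < b ∧ b < d then
        (∑ i, (-(1 / 4 : ℝ)) * (ε i * (ε a * ε b * ε d * wedgeDeComp c i a b d))) •
          (EE e ε a * EE e ε b * EE e ε d) else 0)
    + ∑ a, (∑ i, (-(1 / 4 : ℝ)) * (2 * (ε a * deComp c i i a))) • EE e ε a := by
  simp only [theta3, theta1, EE, smul_add, Finset.smul_sum, Finset.sum_add_distrib,
    smul_ite, smul_zero, smul_smul]
  congr 1
  · rw [Finset.sum_comm]
    refine Finset.sum_congr rfl fun a _ => ?_
    rw [Finset.sum_comm]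
    refine Finset.sum_congr rfl fun b _ => ?_
    rw [Finset.sum_comm]
    refine Finset.sum_congr rfl fun d _ => ?_
    split_ifs with h
    · rw [← Finset.sum_smul]
    · simp
  · rw [Finset.sum_comm]
    refine Finset.sum_congr rfl fun a _ => ?_
    rw [Finset.sum_smul]

lemma coef3 {n : ℕ} (ε : Fin n → ℝ) (c : Fin n → Fin n → Fin n → ℝ)
    (hca : ∀ m x y, c m x y = -c m y x) (a b d : Fin n) :
    Bc ε c a b d - Bc ε c b a d + Bc ε c d a b
      = ∑ i, (-(1 / 4 : ℝ)) * (ε i * (ε a * ε b * ε d * wedgeDeComp c i a b d)) := by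
  have hpt : ∀ i, (-(1 / 4 : ℝ)) * (ε i * (ε a * ε b * ε d * wedgeDeComp c i a b d))
      = (if a = i then (-(1 / 4 : ℝ)) * (ε i * (ε a * ε b * ε d * deComp c i b d)) else 0)
      - (if b = i then (-(1 / 4 : ℝ)) * (ε i * (ε a * ε b * ε d * deComp c i a d)) else 0)
      + (if d = i then (-(1 / 4 : ℝ)) * (ε i * (ε a * ε b * ε d * deComp c i a b)) else 0) := by
    intro i
    simp only [wedgeDeComp, coComp]
    split_ifs <;> ring
  rw [Finset.sum_congr rfl fun i _ => hpt i]
  simp only [Finset.sum_add_distrib, Finset.sum_sub_distrib, Finset.sum_ite_eq,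
    Finset.mem_univ, if_true]
  simp only [Bc, Γcoef, deComp]
  rw [hca d b a, hca b a d, hca a d b]
  ring

lemma coef1 {n : ℕ} (ε : Fin n → ℝ) (c : Fin n → Fin n → Fin n → ℝ)
    (hε : ∀ i, ε i = 1 ∨ ε i = -1) (hca : ∀ m x y, c m x y = -c m y x) (a : Fin n) :
    (∑ i, if i < a then (-ε i) * Bc ε c i i a else 0)
      + (∑ j, if a < j then ε j * Bc ε c j a j else 0)
    = ∑ i, (-(1 / 4 : ℝ)) * (2 * (ε a * deComp c i i a)) := by
  rw [← Finset.sum_add_distrib]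
  refine Finset.sum_congr rfl fun i _ => ?_
  rcases lt_trichotomy i a with h | h | h
  · have h2 : ¬ a < i := by omega
    rw [if_pos h, if_neg h2, add_zero]
    have h0 : c a i i = 0 := by have := hca a i i; linarith
    simp only [Bc, Γcoef, deComp, h0]
    rw [hca i a i]
    rcases hε i with hi | hi <;> rw [hi] <;> ring
  · subst h
    have h0 : c i i i = 0 := by have := hca i i i; linarith
    simp [deComp, h0]
  · have h2 : ¬ i < a := by omega
    rw [if_neg h2, if_pos h, zero_add]
    have h0 : c a i i = 0 := by have := hca a i i; linarith
    simp only [Bc, Γcoef, deComp, h0]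
    rw [hca i a i]
    rcases hε i with hi | hi <;> rw [hi] <;> ring

/-- For an `n`-dimensional real Lie algebra `𝔤` with a pseudo-Riemannian
metric `g` making the basis `e` orthonormal with signs `ε`, and structure constants `c`
(`⁅e_a, e_b⁆ = Σ_m c^m_{ab} e_m`), the Dirac element satisfies
`𝒟 = −(1/4) Σᵢ ( εᵢ Θ(e^i ∧ de^i) + 2 Θ(ι_{eᵢ} de^i) )` in `Cl(𝔤,g)`. -/
theorem dirac_eq_coframe_formula
    (e : Module.Basis (Fin n) ℝ 𝔤) (ε : Fin n → ℝ) (c : Fin n → Fin n → Fin n → ℝ)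
    (hε : ∀ i, ε i = 1 ∨ ε i = -1)
    (hc : ∀ a b, ⁅e a, e b⁆ = ∑ m, c m a b • e m) :
    dirac e ε c =
      (-(1 / 4 : ℝ)) • ∑ i,
        (ε i • theta3 e ε (wedgeDeComp c i) +
          (2 : ℝ) • theta1 e ε (fun a => deComp c i i a)) := by
  have hca := c_antisymm e c hc
  rw [lhs_canon e ε c, rhs_canon e ε c]
  congr 1
  · refine Finset.sum_congr rfl fun a _ => Finset.sum_congr rfl fun b _ =>
      Finset.sum_congr rfl fun d _ => ?_
    split_ifs with h
    · rw [coef3 ε c hca a b d]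
    · rfl
  · refine Finset.sum_congr rfl fun a _ => ?_
    rw [coef1 ε c hε hca a]

end
end

section
/- Let Σ be a finite-dimensional complex inner product space and let γ₁,…,γₙ be skew-adjoint endomorphisms of Σ satisfying the Riemannian Clifford relations γᵢγⱼ + γⱼγᵢ = −2δᵢⱼ·Id for all i,j. Then for any real numbers w_{ij} (1 ≤ i < j ≤ n−1) and any real t ≠ 0, the endomorphism γₙ ∘ (Σ_{1≤i<j≤n−1} w_{ij} γᵢγⱼ + t·Id) of Σ is injective; in particular ‖ωψ + tψ‖² ≥ t²‖ψ‖² for all ψ ∈ Σ, where ω := Σ_{i<j} w_{ij} γᵢγⱼ. (This is the key estimate showing that a non-unimodular almost Abelian Riemannian Lie algebra admits no left-invariant harmonic spinors, since its Dirac operator equals −(1/2)γₙ(ω + tr(D)·Id).) -/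
/-!
STATEMENT 3: key estimate for non-existence of left-invariant harmonic spinors on
non-unimodular almost Abelian Riemannian Lie algebras.
-/

open scoped ComplexInnerProductSpace

/-- Let `Σ` be a finite-dimensional complex inner product space and
`γ₀, …, γₙ` skew-adjoint endomorphisms satisfying the Riemannian Clifford relations
`γᵢγⱼ + γⱼγᵢ = −2δᵢⱼ·Id`.  Then for any real numbers `w i j` (`i < j ≤ n−1`) and any real
`t ≠ 0`, the endomorphism `γₙ ∘ (Σ_{i<j≤n−1} w i j γᵢγⱼ + t·Id)` is injective; in
particular `‖ωψ + tψ‖² ≥ t²‖ψ‖²` for all `ψ`, where `ω := Σ_{i<j} w i j γᵢγⱼ`. -/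
theorem clifford_skew_estimate
    {n : ℕ} {S : Type} [NormedAddCommGroup S] [InnerProductSpace ℂ S]
    [FiniteDimensional ℂ S]
    (γ : Fin (n + 1) → Module.End ℂ S)
    (hskew : ∀ i, ∀ x y : S, ⟪(γ i) x, y⟫ = -⟪x, (γ i) y⟫)
    (hcliff : ∀ i j, γ i * γ j + γ j * γ i =
      if i = j then (-2 : ℂ) • (1 : Module.End ℂ S) else 0)
    (w : Fin n → Fin n → ℝ) (t : ℝ) (ht : t ≠ 0) :
    Function.Injective
        (γ (Fin.last n) *
          ((∑ i : Fin n, ∑ j : Fin n,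
              if i < j then (w i j : ℂ) • (γ i.castSucc * γ j.castSucc) else 0) +
            (t : ℂ) • (1 : Module.End ℂ S))) ∧
      ∀ ψ : S,
        t ^ 2 * ‖ψ‖ ^ 2 ≤
          ‖(∑ i : Fin n, ∑ j : Fin n,
              if i < j then (w i j : ℂ) • (γ i.castSucc * γ j.castSucc) else 0) ψ +
            (t : ℂ) • ψ‖ ^ 2 := by
  classical
  set ω : Module.End ℂ S :=
    ∑ i : Fin n, ∑ j : Fin n,
      if i < j then (w i j : ℂ) • (γ i.castSucc * γ j.castSucc) else 0 with hωdef
  -- each term is skew-adjoint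
  have hterm : ∀ i j : Fin n, i < j → ∀ x y : S,
      ⟪(γ i.castSucc * γ j.castSucc) x, y⟫ = -⟪x, (γ i.castSucc * γ j.castSucc) y⟫ := by
    intro i j hij x y
    have hne : i.castSucc ≠ j.castSucc := by
      simpa [Fin.castSucc_inj] using hij.ne
    have h := hcliff i.castSucc j.castSucc
    rw [if_neg hne] at h
    have hanti : γ j.castSucc * γ i.castSucc = -(γ i.castSucc * γ j.castSucc) :=
      eq_neg_of_add_eq_zero_left (by rwa [add_comm] at h)
    calc ⟪(γ i.castSucc * γ j.castSucc) x, y⟫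
        = ⟪γ i.castSucc (γ j.castSucc x), y⟫ := by rw [Module.End.mul_apply]
      _ = -⟪γ j.castSucc x, γ i.castSucc y⟫ := hskew _ _ _
      _ = -(-⟪x, γ j.castSucc (γ i.castSucc y)⟫) := by rw [hskew]
      _ = ⟪x, (γ j.castSucc * γ i.castSucc) y⟫ := by rw [neg_neg, Module.End.mul_apply]
      _ = -⟪x, (γ i.castSucc * γ j.castSucc) y⟫ := by
          rw [hanti, LinearMap.neg_apply, inner_neg_right]
  -- ω is skew-adjoint
  have hω : ∀ x y : S, ⟪ω x, y⟫ = -⟪x, ω y⟫ := by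
    intro x y
    rw [hωdef]
    simp only [LinearMap.sum_apply, sum_inner, inner_sum, ← Finset.sum_neg_distrib]
    refine Finset.sum_congr rfl fun i _ => Finset.sum_congr rfl fun j _ => ?_
    by_cases hij : i < j
    · simp only [if_pos hij, LinearMap.smul_apply, inner_smul_left, inner_smul_right,
        hterm i j hij x y, Complex.conj_ofReal]
      ring
    · simp [if_neg hij]
  have hre : ∀ ψ : S, (⟪ω ψ, ψ⟫ : ℂ).re = 0 := by
    intro ψ
    have h1 : ⟪ω ψ, ψ⟫ = -⟪ψ, ω ψ⟫ := hω ψ ψ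
    have h2 : (starRingEnd ℂ) ⟪ω ψ, ψ⟫ = ⟪ψ, ω ψ⟫ := inner_conj_symm _ _
    have h4 : ⟪ω ψ, ψ⟫ = -(starRingEnd ℂ) ⟪ω ψ, ψ⟫ := by rw [h2]; exact h1
    have h5 := congrArg Complex.re h4
    simp only [Complex.neg_re, Complex.conj_re] at h5
    linarith
  have hineq : ∀ ψ : S, t ^ 2 * ‖ψ‖ ^ 2 ≤ ‖ω ψ + (t : ℂ) • ψ‖ ^ 2 := by
    intro ψ
    have hexp := @norm_add_sq ℂ S _ _ _ (ω ψ) ((t : ℂ) • ψ)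
    have h2 : RCLike.re ⟪ω ψ, (t : ℂ) • ψ⟫ = 0 := by
      rw [inner_smul_right]
      simp [RCLike.re, Complex.mul_re, hre ψ]
    have h3 : ‖(t : ℂ) • ψ‖ ^ 2 = t ^ 2 * ‖ψ‖ ^ 2 := by
      rw [norm_smul, Complex.norm_real, Real.norm_eq_abs, mul_pow, sq_abs]
    rw [hexp, h2, h3]
    nlinarith [sq_nonneg ‖ω ψ‖]
  have hγn : ∀ x : S, γ (Fin.last n) (γ (Fin.last n) x) = -x := by
    have h := hcliff (Fin.last n) (Fin.last n)
    rw [if_pos rfl] at h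
    intro x
    have h' := congrArg (fun f : Module.End ℂ S => f x) h
    simp only [LinearMap.add_apply, Module.End.mul_apply, LinearMap.smul_apply,
      Module.End.one_apply] at h'
    have h2 : (2 : ℂ) • γ (Fin.last n) (γ (Fin.last n) x) = (2 : ℂ) • (-x) := by
      rw [two_smul, h']
      module
    exact smul_right_injective S (by norm_num : (2 : ℂ) ≠ 0) h2
  refine ⟨?_, hineq⟩
  intro a b hab
  have hab' : γ (Fin.last n) ((ω + (t : ℂ) • 1) a) = γ (Fin.last n) ((ω + (t : ℂ) • 1) b) := by
    simpa [Module.End.mul_apply] using hab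
  have h1 : (ω + (t : ℂ) • 1) a = (ω + (t : ℂ) • 1) b := by
    have h := congrArg (γ (Fin.last n)) hab'
    rw [hγn, hγn] at h
    exact neg_injective h
  have h2 : ω (a - b) + (t : ℂ) • (a - b) = 0 := by
    have h := sub_eq_zero.mpr h1
    simp only [LinearMap.add_apply, LinearMap.smul_apply, Module.End.one_apply] at h
    rw [map_sub, smul_sub]
    rw [← h]
    abel
  have h3 := hineq (a - b)
  rw [h2] at h3
  simp only [norm_zero] at h3
  have h4 : ‖a - b‖ ^ 2 ≤ 0 := by
    have ht2 : 0 < t ^ 2 := by positivity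
    nlinarith [sq_nonneg ‖a - b‖]
  have h5 : a - b = 0 := by
    have := sq_nonneg ‖a - b‖
    have : ‖a - b‖ = 0 := by nlinarith
    exact norm_eq_zero.mp this
  exact sub_eq_zero.mp h5
end

section
/- Let g be a symmetric bilinear form on 𝔤 = aff(ℝ) with matrix [[x,y],[y,z]] in the basis {v₁,v₂} and Lorentzian signature, i.e., xz − y² < 0. Then there exists an automorphism A of 𝔤 such that the matrix of the pulled-back form (u,w) ↦ g(Au, Aw) is one of: diag(1,−t) with t > 0, diag(−1,t) with t > 0, or [[0,1],[1,0]]. Moreover: diag(1,−t₁) is equivalent under Aut(𝔤) to diag(1,−t₂) if and only if t₁ = t₂ (and likewise for diag(−1,t)); and g is equivalent under Aut(𝔤) to [[0,1],[1,0]] if and only if g(v₁,v₁) = 0. -/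
/-!
STATEMENT 5: classification of Lorentzian metrics on aff(ℝ) up to automorphism.
-/

open Matrix

/-- The automorphism group of `aff(ℝ)` in the basis `{v₁,v₂}` consists of the matrices
`[[a,b],[0,1]]` with `a ≠ 0`. -/
def IsAffAut (A : Matrix (Fin 2) (Fin 2) ℝ) : Prop :=
  A 0 0 ≠ 0 ∧ A 1 0 = 0 ∧ A 1 1 = 1

/-- Equivalence of metrics on `aff(ℝ)` up to automorphism: `N = Aᵀ M A` for some
automorphism `A`. -/
def MetricEquiv (M N : Matrix (Fin 2) (Fin 2) ℝ) : Prop :=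
  ∃ A, IsAffAut A ∧ Aᵀ * M * A = N

lemma conj_aff (M : Matrix (Fin 2) (Fin 2) ℝ) (a b : ℝ) :
    (!![a, b; 0, 1])ᵀ * M * !![a, b; 0, 1] =
      !![a * M 0 0 * a, a * M 0 0 * b + a * M 0 1;
         b * M 0 0 * a + M 1 0 * a, b * M 0 0 * b + b * M 0 1 + M 1 0 * b + M 1 1] := by
  rw [show (!![a, b; 0, 1])ᵀ = !![a, 0; b, 1] by
    ext i j; fin_cases i <;> fin_cases j <;> rfl]
  ext i j
  fin_cases i <;> fin_cases j <;>
    (simp [Matrix.mul_apply, Matrix.vecMul, dotProduct, Fin.sum_univ_two]; try ring)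

lemma affProj (A : Matrix (Fin 2) (Fin 2) ℝ) (h : IsAffAut A) :
    A = !![A 0 0, A 0 1; 0, 1] := by
  obtain ⟨_, h1, h2⟩ := h
  ext i j; fin_cases i <;> fin_cases j <;> simp [h1, h2]

lemma offdiag_case (M : Matrix (Fin 2) (Fin 2) ℝ) (hsym : M 1 0 = M 0 1)
    (hx : M 0 0 = 0) (hy : M 0 1 ≠ 0) : MetricEquiv M !![0, 1; 1, 0] := by
  refine ⟨!![1 / M 0 1, -(M 1 1) / (2 * M 0 1); 0, 1], ⟨by simpa using one_div_ne_zero hy, by simp, by simp⟩, ?_⟩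
  rw [conj_aff]
  ext i j
  fin_cases i <;> fin_cases j <;> simp [hx, hsym] <;> field_simp <;> ring

/-- Let `g` be a symmetric bilinear form on `aff(ℝ)` with matrix
`[[x,y],[y,z]]` in the basis `{v₁,v₂}` of Lorentzian signature (`xz − y² < 0`).  Then `g`
is equivalent under `Aut(aff(ℝ))` to one of `diag(1,−t)` (`t > 0`), `diag(−1,t)` (`t > 0`),
or `[[0,1],[1,0]]`.  Moreover `diag(1,−t₁) ∼ diag(1,−t₂)` iff `t₁ = t₂` (likewise for
`diag(−1,t)`), and `g ∼ [[0,1],[1,0]]` iff `g(v₁,v₁) = 0`. -/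
theorem aff_lorentzian_metric_classification
    (M : Matrix (Fin 2) (Fin 2) ℝ) (hsym : M 1 0 = M 0 1)
    (hlor : M 0 0 * M 1 1 - M 0 1 ^ 2 < 0) :
    ((∃ t : ℝ, 0 < t ∧ MetricEquiv M !![1, 0; 0, -t]) ∨
        (∃ t : ℝ, 0 < t ∧ MetricEquiv M !![-1, 0; 0, t]) ∨
        MetricEquiv M !![0, 1; 1, 0]) ∧
      (∀ t₁ t₂ : ℝ, 0 < t₁ → 0 < t₂ →
        (MetricEquiv !![1, 0; 0, -t₁] !![1, 0; 0, -t₂] ↔ t₁ = t₂)) ∧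
      (∀ t₁ t₂ : ℝ, 0 < t₁ → 0 < t₂ →
        (MetricEquiv !![-1, 0; 0, t₁] !![-1, 0; 0, t₂] ↔ t₁ = t₂)) ∧
      (MetricEquiv M !![0, 1; 1, 0] ↔ M 0 0 = 0) := by
  refine ⟨?_, ?_, ?_, ?_⟩
  · -- existence
    rcases lt_trichotomy (M 0 0) 0 with hx | hx | hx
    · -- x < 0 : diag(-1, t)
      right; left
      have hxne : M 0 0 ≠ 0 := ne_of_lt hx
      obtain ⟨s, hs0, hxeq⟩ : ∃ s : ℝ, s ≠ 0 ∧ M 0 0 = -(s * s) := by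
        refine ⟨Real.sqrt (-(M 0 0)), Real.sqrt_ne_zero'.mpr (by linarith), ?_⟩
        rw [Real.mul_self_sqrt (by linarith)]; ring
      refine ⟨(M 0 0 * M 1 1 - M 0 1 ^ 2) / M 0 0,
        div_pos_of_neg_of_neg hlor hx, ?_⟩
      refine ⟨!![1 / s, -(M 0 1) / M 0 0; 0, 1],
        ⟨by simpa using one_div_ne_zero hs0, by simp, by simp⟩, ?_⟩
      rw [conj_aff]
      ext i j
      fin_cases i <;> fin_cases j <;> simp only [hsym, hxeq] <;>
        simp <;> field_simp <;> ring
    · -- x = 0 : offdiag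
      right; right
      have hy : M 0 1 ≠ 0 := by
        intro h; rw [hx, h] at hlor; norm_num at hlor
      exact offdiag_case M hsym hx hy
    · -- x > 0 : diag(1, -t)
      left
      have hxne : M 0 0 ≠ 0 := ne_of_gt hx
      obtain ⟨s, hs0, hxeq⟩ : ∃ s : ℝ, s ≠ 0 ∧ M 0 0 = s * s := by
        exact ⟨Real.sqrt (M 0 0), Real.sqrt_ne_zero'.mpr (by linarith),
          (Real.mul_self_sqrt (by linarith)).symm⟩
      refine ⟨(M 0 1 ^ 2 - M 0 0 * M 1 1) / M 0 0,
        div_pos (by nlinarith) hx, ?_⟩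
      refine ⟨!![1 / s, -(M 0 1) / M 0 0; 0, 1],
        ⟨by simpa using one_div_ne_zero hs0, by simp, by simp⟩, ?_⟩
      rw [conj_aff]
      ext i j
      fin_cases i <;> fin_cases j <;> simp only [hsym, hxeq] <;>
        simp <;> field_simp <;> ring
  · -- diag(1,-t) uniqueness
    intro t₁ t₂ ht₁ ht₂
    constructor
    · rintro ⟨A, hA, hEq⟩
      have ha := hA.1
      rw [affProj A hA, conj_aff] at hEq
      have h01 := congrFun (congrFun hEq 0) 1
      have h11 := congrFun (congrFun hEq 1) 1
      simp at h01 h11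
      have hb : A 0 1 = 0 := by
        rcases h01 with h | h
        · exact absurd h ha
        · exact h
      rw [hb] at h11
      linarith [h11]
    · rintro rfl
      refine ⟨!![1, 0; 0, 1], ⟨by norm_num, by simp, by simp⟩, ?_⟩
      rw [conj_aff]
      norm_num
  · -- diag(-1,t) uniqueness
    intro t₁ t₂ ht₁ ht₂
    constructor
    · rintro ⟨A, hA, hEq⟩
      have ha := hA.1
      rw [affProj A hA, conj_aff] at hEq
      have h01 := congrFun (congrFun hEq 0) 1
      have h11 := congrFun (congrFun hEq 1) 1
      simp at h01 h11
      have hb : A 0 1 = 0 := by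
        rcases h01 with h | h
        · exact absurd h ha
        · exact h
      rw [hb] at h11
      linarith [h11]
    · rintro rfl
      refine ⟨!![1, 0; 0, 1], ⟨by norm_num, by simp, by simp⟩, ?_⟩
      rw [conj_aff]
      norm_num
  · -- offdiag iff x = 0
    constructor
    · rintro ⟨A, hA, hEq⟩
      have ha := hA.1
      rw [affProj A hA, conj_aff] at hEq
      have h00 := congrFun (congrFun hEq 0) 0
      simp at h00
      rcases h00 with h | h
      · rcases h with h | h
        · exact absurd h ha
        · exact h
      · exact absurd h ha
    · intro hx
      have hy : M 0 1 ≠ 0 := by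
        intro h; rw [hx, h] at hlor; norm_num at hlor
      exact offdiag_case M hsym hx hy
end

section
/- For all real numbers a₁₂, a₁₃, a₂₃, b₁₂, b₁₃, if the Lie algebra 𝔤(a₁₂,a₁₃,a₂₃,b₁₂,b₁₃) is nilpotent (indeed, if [x,[y,z]] = 0 for all elements x,y,z), then a₁₂ = a₁₃ = a₂₃ = b₁₂ = b₁₃ = 0, i.e., the Lie algebra is Abelian. -/
/-!
STATEMENT 9: if 𝔤(a₁₂,a₁₃,a₂₃,b₁₂,b₁₃) is (two-step) nilpotent then it is Abelian.
-/

/-- The skew-symmetric bilinear bracket on `ℝ³` determined by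
`[e₁,e₂] = −a₁₂e₁ − b₁₂e₂ + (a₂₃−b₁₃)e₃`, `[e₁,e₃] = −a₁₃e₁ − b₁₃e₂ + b₁₂e₃`,
`[e₂,e₃] = −a₂₃e₁ + a₁₃e₂ − a₁₂e₃`. -/
def harmBracket (a₁₂ a₁₃ a₂₃ b₁₂ b₁₃ : ℝ) (u v : Fin 3 → ℝ) : Fin 3 → ℝ :=
  (u 0 * v 1 - u 1 * v 0) • ![-a₁₂, -b₁₂, a₂₃ - b₁₃] +
    (u 0 * v 2 - u 2 * v 0) • ![-a₁₃, -b₁₃, b₁₂] +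
    (u 1 * v 2 - u 2 * v 1) • ![-a₂₃, a₁₃, -a₁₂]

/-- For all real `a₁₂, a₁₃, a₂₃, b₁₂, b₁₃`, if
`[x,[y,z]] = 0` for all `x, y, z` in `𝔤(a₁₂,a₁₃,a₂₃,b₁₂,b₁₃)` (in particular, if the Lie
algebra is nilpotent), then `a₁₂ = a₁₃ = a₂₃ = b₁₂ = b₁₃ = 0`, i.e. the Lie algebra is
Abelian. -/
theorem harmBracket_nilpotent_abelian (a₁₂ a₁₃ a₂₃ b₁₂ b₁₃ : ℝ)
    (h : ∀ x y z : Fin 3 → ℝ,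
      harmBracket a₁₂ a₁₃ a₂₃ b₁₂ b₁₃ x (harmBracket a₁₂ a₁₃ a₂₃ b₁₂ b₁₃ y z) = 0) :
    a₁₂ = 0 ∧ a₁₃ = 0 ∧ a₂₃ = 0 ∧ b₁₂ = 0 ∧ b₁₃ = 0 := by
  have h1 := congrFun (h ![0,0,1] ![0,1,0] ![0,0,1]) 1
  have h2 := congrFun (h ![0,1,0] ![0,0,1] ![0,1,0]) 2
  have h3 := congrFun (h ![1,0,0] ![1,0,0] ![0,0,1]) 2
  simp [harmBracket] at h1 h2 h3
  have ha12 : a₁₂ = 0 := by nlinarith [sq_nonneg a₁₂, sq_nonneg a₁₃, sq_nonneg a₂₃]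
  have ha13 : a₁₃ = 0 := by nlinarith [sq_nonneg a₁₂, sq_nonneg a₁₃, sq_nonneg a₂₃]
  have ha23 : a₂₃ = 0 := by nlinarith [sq_nonneg a₁₂, sq_nonneg a₁₃, sq_nonneg a₂₃]
  have hb12 : b₁₂ = 0 := by nlinarith [sq_nonneg b₁₂, sq_nonneg b₁₃]
  have hb13 : b₁₃ = 0 := by nlinarith [sq_nonneg b₁₂, sq_nonneg b₁₃]
  exact ⟨ha12, ha13, ha23, hb12, hb13⟩
end

section
/- For all real numbers a₁₂, a₁₃, a₂₃, b₁₂, b₁₃, the Killing form B(x,y) := tr(ad(x)∘ad(y)) of 𝔤(a₁₂,a₁₃,a₂₃,b₁₂,b₁₃) satisfies B(e₁,e₁) + B(e₂,e₂) + B(e₃,e₃) = 2(a₁₂² + a₁₃² + a₂₃² − a₂₃b₁₃ + b₁₂² + b₁₃²); moreover this quantity is strictly positive whenever (a₁₂, a₁₃, a₂₃, b₁₂, b₁₃) ≠ (0,0,0,0,0). -/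
/-- The matrix (in the standard basis) of the adjoint map `ad(x) = [x,·]`. -/
def adMatrix (a₁₂ a₁₃ a₂₃ b₁₂ b₁₃ : ℝ) (x : Fin 3 → ℝ) : Matrix (Fin 3) (Fin 3) ℝ :=
  Matrix.of fun m j => harmBracket a₁₂ a₁₃ a₂₃ b₁₂ b₁₃ x (Pi.single j 1) m

/-- The Killing form `B(x,y) = tr(ad(x) ∘ ad(y))`. -/
def killingFormG (a₁₂ a₁₃ a₂₃ b₁₂ b₁₃ : ℝ) (x y : Fin 3 → ℝ) : ℝ :=
  (adMatrix a₁₂ a₁₃ a₂₃ b₁₂ b₁₃ x * adMatrix a₁₂ a₁₃ a₂₃ b₁₂ b₁₃ y).trace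

/-- The Killing form of `𝔤(a₁₂,a₁₃,a₂₃,b₁₂,b₁₃)` satisfies
`B(e₁,e₁)+B(e₂,e₂)+B(e₃,e₃) = 2(a₁₂² + a₁₃² + a₂₃² − a₂₃b₁₃ + b₁₂² + b₁₃²)`,
and this quantity is strictly positive whenever the parameters are not all zero. -/
theorem harmBracket_killing_trace (a₁₂ a₁₃ a₂₃ b₁₂ b₁₃ : ℝ) :
    killingFormG a₁₂ a₁₃ a₂₃ b₁₂ b₁₃ (Pi.single 0 1) (Pi.single 0 1) +
          killingFormG a₁₂ a₁₃ a₂₃ b₁₂ b₁₃ (Pi.single 1 1) (Pi.single 1 1) +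
          killingFormG a₁₂ a₁₃ a₂₃ b₁₂ b₁₃ (Pi.single 2 1) (Pi.single 2 1) =
        2 * (a₁₂ ^ 2 + a₁₃ ^ 2 + a₂₃ ^ 2 - a₂₃ * b₁₃ + b₁₂ ^ 2 + b₁₃ ^ 2) ∧
      ((a₁₂, a₁₃, a₂₃, b₁₂, b₁₃) ≠ (0, 0, 0, 0, 0) →
        0 < 2 * (a₁₂ ^ 2 + a₁₃ ^ 2 + a₂₃ ^ 2 - a₂₃ * b₁₃ + b₁₂ ^ 2 + b₁₃ ^ 2)) := by
  constructor
  · simp [killingFormG, adMatrix, harmBracket, Matrix.trace, Matrix.mul_apply,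
      Fin.sum_univ_three, Pi.single_apply, Matrix.of_apply]
    ring
  · intro h
    by_contra hle
    push_neg at hle
    apply h
    have k : a₂₃ ^ 2 - a₂₃ * b₁₃ + b₁₃ ^ 2 = (a₂₃ - b₁₃ / 2) ^ 2 + 3 / 4 * b₁₃ ^ 2 := by ring
    have h1 : a₁₂ = 0 := by nlinarith [sq_nonneg a₁₃, sq_nonneg b₁₂, sq_nonneg (a₂₃ - b₁₃/2), sq_nonneg b₁₃, sq_nonneg a₁₂]
    have h2 : a₁₃ = 0 := by nlinarith [sq_nonneg a₁₂, sq_nonneg b₁₂, sq_nonneg (a₂₃ - b₁₃/2), sq_nonneg b₁₃, sq_nonneg a₁₃]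
    have h4 : b₁₂ = 0 := by nlinarith [sq_nonneg a₁₂, sq_nonneg a₁₃, sq_nonneg (a₂₃ - b₁₃/2), sq_nonneg b₁₃, sq_nonneg b₁₂]
    have h5 : b₁₃ = 0 := by nlinarith [sq_nonneg a₁₂, sq_nonneg a₁₃, sq_nonneg (a₂₃ - b₁₃/2), sq_nonneg b₁₂, sq_nonneg b₁₃]
    have h3 : a₂₃ = 0 := by nlinarith [sq_nonneg a₁₂, sq_nonneg a₁₃, sq_nonneg b₁₂, sq_nonneg b₁₃, sq_nonneg (a₂₃ - b₁₃/2)]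
    simp [h1, h2, h3, h4, h5]
end

section
/- For real numbers a₁₂, a₁₃, a₂₃, b₁₂, b₁₃, let C be the 3×3 matrix [[−a₁₂, −a₁₃, −a₂₃], [−b₁₂, −b₁₃, a₁₃], [a₂₃−b₁₃, b₁₂, −a₁₂]]. If det C ≠ 0, then 𝔤(a₁₂,a₁₃,a₂₃,b₁₂,b₁₃) is isomorphic to sl(2,ℝ); equivalently, there exists a basis x, y, z of 𝔤(a₁₂,a₁₃,a₂₃,b₁₂,b₁₃) with [x,y] = 2z, [z,x] = 2y, [z,y] = 2x. -/
open Matrix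

lemma dotCross_cyc (u v w : Fin 3 → ℝ) : u ⬝ᵥ (v ⨯₃ w) = w ⬝ᵥ (u ⨯₃ v) := by
  simp [cross_apply, dotProduct, Fin.sum_univ_three]; ring

lemma dotCross_left (u v : Fin 3 → ℝ) : u ⬝ᵥ (u ⨯₃ v) = 0 := by
  simp [cross_apply, dotProduct, Fin.sum_univ_three]; ring

lemma dotCross_right (u v : Fin 3 → ℝ) : v ⬝ᵥ (u ⨯₃ v) = 0 := by
  simp [cross_apply, dotProduct, Fin.sum_univ_three]; ring

lemma cross_smul_smul (a b : ℝ) (u v : Fin 3 → ℝ) :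
    (a • u) ⨯₃ (b • v) = (a * b) • (u ⨯₃ v) := by
  funext i; fin_cases i <;> simp [cross_apply] <;> ring

/-- If a symmetric-style bracket `(u,v) ↦ A *ᵥ (u ⨯₃ v)` has an orthonormal eigenbasis with
eigenvalues of mixed signs as indicated, then it carries an `sl₂`-basis. -/
lemma aux_sl2 (A : Matrix (Fin 3) (Fin 3) ℝ) (g : Fin 3 → (Fin 3 → ℝ)) (ν : Fin 3 → ℝ)
    (horth : ∀ i j, g i ⬝ᵥ g j = if i = j then 1 else 0)
    (heig : ∀ i, A *ᵥ g i = ν i • g i)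
    (h12 : 0 < ν 1 * ν 2) (h01 : ν 0 * ν 1 < 0) :
    ∃ b : Module.Basis (Fin 3) ℝ (Fin 3 → ℝ),
      A *ᵥ (b 0 ⨯₃ b 1) = (2:ℝ) • b 2 ∧ A *ᵥ (b 2 ⨯₃ b 0) = (2:ℝ) • b 1 ∧
        A *ᵥ (b 2 ⨯₃ b 1) = (2:ℝ) • b 0 := by
  set ε : ℝ := g 2 ⬝ᵥ (g 0 ⨯₃ g 1) with hε
  set G : Matrix (Fin 3) (Fin 3) ℝ := Matrix.of (fun i j => g i j) with hG
  have hGGT : G * Gᵀ = 1 := by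
    ext i j
    simpa [hG, Matrix.mul_apply, Matrix.one_apply, dotProduct] using horth i j
  have hGTG : Gᵀ * G = 1 := mul_eq_one_comm.mp hGGT
  have key : ∀ w : Fin 3 → ℝ, (∀ i, g i ⬝ᵥ w = 0) → w = 0 := by
    intro w hw
    have h1 : G *ᵥ w = 0 := by
      funext i; simpa [hG, Matrix.mulVec, dotProduct] using hw i
    have h2 : Gᵀ *ᵥ (G *ᵥ w) = w := by
      rw [Matrix.mulVec_mulVec, hGTG, Matrix.one_mulVec]
    rw [← h2, h1, Matrix.mulVec_zero]
  -- cyclic triple products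
  have hcyc1 : g 0 ⬝ᵥ (g 1 ⨯₃ g 2) = ε := by rw [hε, dotCross_cyc]
  have hcyc2 : g 1 ⬝ᵥ (g 2 ⨯₃ g 0) = ε := by rw [dotCross_cyc, hcyc1]
  -- cross relations
  have hc01 : g 0 ⨯₃ g 1 = ε • g 2 := by
    have := key (g 0 ⨯₃ g 1 - ε • g 2) (by
      intro i
      fin_cases i <;>
        simp [dotProduct_sub, dotProduct_smul, horth,
          dotCross_left, dotCross_right, ← hε])
    linear_combination (norm := module) this
  have hc12 : g 1 ⨯₃ g 2 = ε • g 0 := by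
    have := key (g 1 ⨯₃ g 2 - ε • g 0) (by
      intro i
      fin_cases i <;>
        simp [dotProduct_sub, dotProduct_smul, horth,
          dotCross_left, dotCross_right, hcyc1, hcyc2])
    linear_combination (norm := module) this
  have hc20 : g 2 ⨯₃ g 0 = ε • g 1 := by
    have := key (g 2 ⨯₃ g 0 - ε • g 1) (by
      intro i
      fin_cases i <;>
        simp [dotProduct_sub, dotProduct_smul, horth,
          dotCross_left, dotCross_right, hcyc1, hcyc2])
    linear_combination (norm := module) this
  -- ε² = 1
  have hεdet : ε = G.det := by
    have h1 : (![g 0, g 1, g 2] : Matrix (Fin 3) (Fin 3) ℝ) = G := by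
      ext i j; fin_cases i <;> simp [hG]
    rw [← hcyc1, triple_product_eq_det, h1]
  have hε2 : ε * ε = 1 := by
    have := congrArg Matrix.det hGGT
    rw [Matrix.det_mul, Matrix.det_transpose, Matrix.det_one] at this
    rw [hεdet]; exact this
  -- rescaled eigenvalues
  set ν' : Fin 3 → ℝ := fun i => ε * ν i with hν'
  have h12' : 0 < ν' 1 * ν' 2 := by simp only [hν']; nlinarith
  have h01' : ν' 0 * ν' 1 < 0 := by simp only [hν']; nlinarith
  have hν'1 : ν' 1 ≠ 0 := by intro h; rw [h] at h01'; simp at h01'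
  have hν'2 : ν' 2 ≠ 0 := by intro h; rw [h] at h12'; simp at h12'
  -- bracket relations on g
  have hb01 : A *ᵥ (g 0 ⨯₃ g 1) = ν' 2 • g 2 := by
    rw [hc01, Matrix.mulVec_smul, heig 2, smul_smul]
  have hb12 : A *ᵥ (g 1 ⨯₃ g 2) = ν' 0 • g 0 := by
    rw [hc12, Matrix.mulVec_smul, heig 0, smul_smul]
  have hb20 : A *ᵥ (g 2 ⨯₃ g 0) = ν' 1 • g 1 := by
    rw [hc20, Matrix.mulVec_smul, heig 1, smul_smul]
  -- scalars
  set s : ℝ := 2 / Real.sqrt (ν' 1 * ν' 2) with hs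
  set u : ℝ := 2 / Real.sqrt (-(ν' 0 * ν' 1)) with hu
  set t : ℝ := u * s * ν' 1 / 2 with ht
  have hsq1pos : 0 < Real.sqrt (ν' 1 * ν' 2) := Real.sqrt_pos.mpr h12'
  have hsq2pos : 0 < Real.sqrt (-(ν' 0 * ν' 1)) := Real.sqrt_pos.mpr (by linarith)
  have hspos : 0 < s := by positivity
  have hupos : 0 < u := by positivity
  have htne : t ≠ 0 := by
    rw [ht]
    exact div_ne_zero (mul_ne_zero (mul_ne_zero hupos.ne' hspos.ne') hν'1) two_ne_zero
  have hss : s * s * (ν' 1 * ν' 2) = 4 := by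
    rw [hs, div_mul_div_comm, div_mul_eq_mul_div, Real.mul_self_sqrt h12'.le,
      mul_div_assoc, div_self h12'.ne', mul_one]
    norm_num
  have huu : u * u * (-(ν' 0 * ν' 1)) = 4 := by
    have hne : -(ν' 0 * ν' 1) ≠ 0 := by linarith
    rw [hu, div_mul_div_comm, div_mul_eq_mul_div, Real.mul_self_sqrt (by linarith),
      mul_div_assoc, div_self hne, mul_one]
    norm_num
  -- the basis vectors
  set b : Fin 3 → (Fin 3 → ℝ) := ![s • g 0, t • g 1, u • g 2] with hbdef
  have hli : LinearIndependent ℝ b := by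
    rw [Fintype.linearIndependent_iff]
    intro d hsum
    have hdot : ∀ j, g j ⬝ᵥ (∑ i, d i • b i) = 0 := fun j => by
      rw [hsum, dotProduct_zero]
    have h0 := hdot 0; have h1 := hdot 1; have h2 := hdot 2
    simp [Fin.sum_univ_three, hbdef, dotProduct_add,
      dotProduct_smul, smul_smul, horth] at h0 h1 h2
    intro i
    fin_cases i
    · exact h0.resolve_right hspos.ne'
    · exact h1.resolve_right htne
    · exact h2.resolve_right hupos.ne'
  have hcard : Fintype.card (Fin 3) = Module.finrank ℝ (Fin 3 → ℝ) := by simp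
  refine ⟨basisOfLinearIndependentOfCardEqFinrank hli hcard, ?_, ?_, ?_⟩ <;>
    rw [coe_basisOfLinearIndependentOfCardEqFinrank] <;>
    simp only [hbdef, Matrix.cons_val_zero, Matrix.cons_val_one, Matrix.head_cons,
      Matrix.cons_val_two, Matrix.tail_cons]
  · rw [cross_smul_smul, Matrix.mulVec_smul, hb01, smul_smul, smul_smul]
    congr 1
    rw [ht]; linear_combination (u / 2) * hss
  · rw [cross_smul_smul, Matrix.mulVec_smul, hb20, smul_smul, smul_smul]
    congr 1
    rw [ht]; ring
  · rw [cross_smul_smul, ← cross_anticomm (g 1) (g 2), smul_neg, Matrix.mulVec_neg,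
      Matrix.mulVec_smul, hb12, smul_smul, ← neg_smul, smul_smul]
    congr 1
    rw [ht]; linear_combination (s / 2) * huu

/-- Three nonzero reals summing to zero can be permuted so that the first two have
opposite signs and the last two have the same sign. -/
lemma perm_signs (μ : Fin 3 → ℝ) (h0 : ∀ i, μ i ≠ 0) (hs : μ 0 + μ 1 + μ 2 = 0) :
    ∃ σ : Equiv.Perm (Fin 3), μ (σ 0) * μ (σ 1) < 0 ∧ 0 < μ (σ 1) * μ (σ 2) := by
  rcases (h0 0).lt_or_gt with p0 | p0 <;> rcases (h0 1).lt_or_gt with p1 | p1 <;>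
    rcases (h0 2).lt_or_gt with p2 | p2
  · linarith
  · exact ⟨Equiv.swap 0 2, by simp [Equiv.swap_apply_def]; constructor <;> nlinarith⟩
  · exact ⟨Equiv.swap 0 1, by simp [Equiv.swap_apply_def]; constructor <;> nlinarith⟩
  · exact ⟨1, by simp; constructor <;> nlinarith⟩
  · exact ⟨1, by simp; constructor <;> nlinarith⟩
  · exact ⟨Equiv.swap 0 1, by simp [Equiv.swap_apply_def]; constructor <;> nlinarith⟩
  · exact ⟨Equiv.swap 0 2, by simp [Equiv.swap_apply_def]; constructor <;> nlinarith⟩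
  · linarith

/-- The bracket is `u, v ↦ A *ᵥ (u ⨯₃ v)` for the symmetric traceless matrix `A`. -/
lemma harmBracket_eq_mulVec_cross (a₁₂ a₁₃ a₂₃ b₁₂ b₁₃ : ℝ) (u v : Fin 3 → ℝ) :
    harmBracket a₁₂ a₁₃ a₂₃ b₁₂ b₁₃ u v =
      (!![-a₂₃, a₁₃, -a₁₂; a₁₃, b₁₃, -b₁₂; -a₁₂, -b₁₂, a₂₃ - b₁₃] :
        Matrix (Fin 3) (Fin 3) ℝ) *ᵥ (u ⨯₃ v) := by
  funext i
  fin_cases i <;>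
    simp [harmBracket, cross_apply, Matrix.mulVec, dotProduct, Fin.sum_univ_three] <;> ring

/-- Let `C` be the matrix of structure constants below.  If
`det C ≠ 0`, then `𝔤(a₁₂,a₁₃,a₂₃,b₁₂,b₁₃)` is isomorphic to `sl(2,ℝ)`: there is a basis
`x, y, z` with `[x,y] = 2z`, `[z,x] = 2y`, `[z,y] = 2x`. -/
theorem harmBracket_det_ne_zero_sl2 (a₁₂ a₁₃ a₂₃ b₁₂ b₁₃ : ℝ)
    (hC : (!![-a₁₂, -a₁₃, -a₂₃; -b₁₂, -b₁₃, a₁₃; a₂₃ - b₁₃, b₁₂, -a₁₂] :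
      Matrix (Fin 3) (Fin 3) ℝ).det ≠ 0) :
    ∃ b : Module.Basis (Fin 3) ℝ (Fin 3 → ℝ),
      harmBracket a₁₂ a₁₃ a₂₃ b₁₂ b₁₃ (b 0) (b 1) = (2 : ℝ) • b 2 ∧
        harmBracket a₁₂ a₁₃ a₂₃ b₁₂ b₁₃ (b 2) (b 0) = (2 : ℝ) • b 1 ∧
        harmBracket a₁₂ a₁₃ a₂₃ b₁₂ b₁₃ (b 2) (b 1) = (2 : ℝ) • b 0 := by
  set A : Matrix (Fin 3) (Fin 3) ℝ :=
    !![-a₂₃, a₁₃, -a₁₂; a₁₃, b₁₃, -b₁₂; -a₁₂, -b₁₂, a₂₃ - b₁₃] with hA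
  have hdet : A.det ≠ 0 := by
    have : A.det = (!![-a₁₂, -a₁₃, -a₂₃; -b₁₂, -b₁₃, a₁₃; a₂₃ - b₁₃, b₁₂, -a₁₂] :
        Matrix (Fin 3) (Fin 3) ℝ).det := by
      simp [hA, Matrix.det_fin_three]; ring
    rw [this]; exact hC
  have hherm : A.IsHermitian := by
    ext i j
    fin_cases i <;> fin_cases j <;> simp [hA]
  set μ := hherm.eigenvalues with hμdef
  set f := hherm.eigenvectorBasis with hfdef
  have heig : ∀ i, A *ᵥ (f i : Fin 3 → ℝ) = μ i • (f i : Fin 3 → ℝ) :=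
    hherm.mulVec_eigenvectorBasis
  have horth : ∀ i j, (f i : Fin 3 → ℝ) ⬝ᵥ (f j : Fin 3 → ℝ) = if i = j then 1 else 0 := by
    intro i j
    have := orthonormal_iff_ite.mp f.orthonormal i j
    simpa [PiLp.inner_apply, dotProduct, RCLike.inner_apply, conj_trivial,
      mul_comm] using this
  have hprod : ∀ i, μ i ≠ 0 := by
    intro i hi
    apply hdet
    rw [hherm.det_eq_prod_eigenvalues]
    exact Finset.prod_eq_zero (Finset.mem_univ i) (by simpa using hi)
  have htrace : μ 0 + μ 1 + μ 2 = 0 := by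
    have h1 : (star (hherm.eigenvectorUnitary : Matrix (Fin 3) (Fin 3) ℝ)) * A *
        (hherm.eigenvectorUnitary : Matrix (Fin 3) (Fin 3) ℝ) = diagonal (RCLike.ofReal ∘ μ) :=
      by
        have := hherm.conjStarAlgAut_star_eigenvectorUnitary
        simpa [Unitary.conjStarAlgAut_apply] using this
    have h2 := congrArg Matrix.trace h1
    rw [Matrix.trace_mul_cycle,
      (Matrix.mem_unitaryGroup_iff).mp (hherm.eigenvectorUnitary).2, one_mul,
      Matrix.trace_diagonal] at h2
    have h3 : A.trace = 0 := by simp [hA, Matrix.trace_fin_three]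
    rw [h3, Fin.sum_univ_three] at h2
    simpa using h2.symm
  obtain ⟨σ, hσ1, hσ2⟩ := perm_signs μ hprod htrace
  obtain ⟨b, hb1, hb2, hb3⟩ :=
    aux_sl2 A (fun j => (f (σ j) : Fin 3 → ℝ)) (fun j => μ (σ j))
      (fun i j => by rw [horth (σ i) (σ j)]; simp [σ.injective.eq_iff])
      (fun i => heig (σ i)) hσ2 hσ1
  exact ⟨b, by rw [harmBracket_eq_mulVec_cross]; exact hb1,
    by rw [harmBracket_eq_mulVec_cross]; exact hb2,
    by rw [harmBracket_eq_mulVec_cross]; exact hb3⟩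
end

section
/- For real numbers a₁₂, a₁₃, a₂₃, b₁₂, b₁₃, not all zero, let C be the 3×3 matrix [[−a₁₂, −a₁₃, −a₂₃], [−b₁₂, −b₁₃, a₁₃], [a₂₃−b₁₃, b₁₂, −a₁₂]]. If det C = 0, then 𝔤(a₁₂,a₁₃,a₂₃,b₁₂,b₁₃) is isomorphic to 𝔢(1,1); equivalently, there exists a basis x, y, z of 𝔤(a₁₂,a₁₃,a₂₃,b₁₂,b₁₃) with [x,y] = 0, [z,x] = x, [z,y] = −y. -/
namespace HarmAux

/-- cross product -/
def cp (u v : Fin 3 → ℝ) : Fin 3 → ℝ :=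
  ![u 1 * v 2 - u 2 * v 1, u 2 * v 0 - u 0 * v 2, u 0 * v 1 - u 1 * v 0]

variable {a₁₂ a₁₃ a₂₃ b₁₂ b₁₃ : ℝ}

lemma hb_add_right (u v w : Fin 3 → ℝ) :
    harmBracket a₁₂ a₁₃ a₂₃ b₁₂ b₁₃ u (v + w)
      = harmBracket a₁₂ a₁₃ a₂₃ b₁₂ b₁₃ u v + harmBracket a₁₂ a₁₃ a₂₃ b₁₂ b₁₃ u w := by
  funext i; fin_cases i <;> simp [harmBracket] <;> ring

lemma hb_sub_right (u v w : Fin 3 → ℝ) :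
    harmBracket a₁₂ a₁₃ a₂₃ b₁₂ b₁₃ u (v - w)
      = harmBracket a₁₂ a₁₃ a₂₃ b₁₂ b₁₃ u v - harmBracket a₁₂ a₁₃ a₂₃ b₁₂ b₁₃ u w := by
  funext i; fin_cases i <;> simp [harmBracket] <;> ring

lemma hb_smul_right (c : ℝ) (u v : Fin 3 → ℝ) :
    harmBracket a₁₂ a₁₃ a₂₃ b₁₂ b₁₃ u (c • v) = c • harmBracket a₁₂ a₁₃ a₂₃ b₁₂ b₁₃ u v := by
  funext i; fin_cases i <;> simp [harmBracket] <;> ring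

lemma hb_smul_left (c : ℝ) (u v : Fin 3 → ℝ) :
    harmBracket a₁₂ a₁₃ a₂₃ b₁₂ b₁₃ (c • u) v = c • harmBracket a₁₂ a₁₃ a₂₃ b₁₂ b₁₃ u v := by
  funext i; fin_cases i <;> simp [harmBracket] <;> ring

lemma hb_self (u : Fin 3 → ℝ) : harmBracket a₁₂ a₁₃ a₂₃ b₁₂ b₁₃ u u = 0 := by
  funext i; fin_cases i <;> simp [harmBracket] <;> ring

lemma hb_zero_right (u : Fin 3 → ℝ) : harmBracket a₁₂ a₁₃ a₂₃ b₁₂ b₁₃ u 0 = 0 := by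
  funext i; fin_cases i <;> simp [harmBracket]

lemma cp_smul_right (c : ℝ) (u v : Fin 3 → ℝ) : cp u (c • v) = c • cp u v := by
  funext i; fin_cases i <;> simp [cp] <;> ring

end HarmAux

namespace HarmAux

lemma lemDot (k s : Fin 3 → ℝ)
    (h1 : -(a₂₃ * k 0) + a₁₃ * k 1 - a₁₂ * k 2 = 0)
    (h2 : a₁₃ * k 0 + b₁₃ * k 1 - b₁₂ * k 2 = 0)
    (h3 : -(a₁₂ * k 0) - b₁₂ * k 1 + (a₂₃ - b₁₃) * k 2 = 0) :
    harmBracket a₁₂ a₁₃ a₂₃ b₁₂ b₁₃ k s 0 * k 0 + harmBracket a₁₂ a₁₃ a₂₃ b₁₂ b₁₃ k s 1 * k 1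
      + harmBracket a₁₂ a₁₃ a₂₃ b₁₂ b₁₃ k s 2 * k 2 = 0 := by
  simp only [harmBracket, Pi.add_apply, Pi.smul_apply, smul_eq_mul,
    Matrix.cons_val_zero, Matrix.cons_val_one, Matrix.head_cons, Matrix.cons_val_two,
    Matrix.tail_cons]
  linear_combination ((-1) * k 2 * s 1 + k 1 * s 2) * h1 + (k 2 * s 0 + (-1) * k 0 * s 2) * h2 +
    ((-1) * k 1 * s 0 + k 0 * s 1) * h3

end HarmAux

namespace HarmAux

lemma lemA2 (k s : Fin 3 → ℝ)
    (h1 : -(a₂₃ * k 0) + a₁₃ * k 1 - a₁₂ * k 2 = 0)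
    (h2 : a₁₃ * k 0 + b₁₃ * k 1 - b₁₂ * k 2 = 0)
    (h3 : -(a₁₂ * k 0) - b₁₂ * k 1 + (a₂₃ - b₁₃) * k 2 = 0)
    (hsk : s 0 * k 0 + s 1 * k 1 + s 2 * k 2 = 0) :
    harmBracket a₁₂ a₁₃ a₂₃ b₁₂ b₁₃ k (harmBracket a₁₂ a₁₃ a₂₃ b₁₂ b₁₃ k s)
      = ((a₂₃ ^ 2 + b₁₃ ^ 2 + (a₂₃ - b₁₃) ^ 2 + 2 * (a₁₃ ^ 2 + a₁₂ ^ 2 + b₁₂ ^ 2))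
          * (k 0 ^ 2 + k 1 ^ 2 + k 2 ^ 2) / 2) • s := by
  funext i
  fin_cases i <;> simp [harmBracket]
  · linear_combination ((-1) * b₁₃ * k 1 * s 1 + (-1) * b₁₃ * k 0 * s 0 + b₁₂ * k 1 * s 2 + a₂₃ * k 1 * s 1 + a₂₃ * k 0 * s 0 + (-1) * a₁₃ * k 1 * s 0 + a₁₃ * k 0 * s 1 + a₁₂ * k 2 * s 0) * h1 + ((-1) * b₁₃ * k 1 * s 0 + b₁₃ * k 0 * s 1 + b₁₂ * k 2 * s 0 + (-1) * b₁₂ * k 0 * s 2 + a₁₃ * k 2 * s 2 + a₁₃ * k 1 * s 1 + a₁₃ * k 0 * s 0) * h2 + (b₁₃ * k 2 * s 0 + (-1) * b₁₃ * k 0 * s 2 + b₁₂ * k 1 * s 0 + (-1) * b₁₂ * k 0 * s 1 + (-1) * a₂₃ * k 2 * s 0 + a₁₃ * k 1 * s 2 + a₁₂ * k 1 * s 1 + a₁₂ * k 0 * s 0) * h3 + ((-1) * b₁₃ * b₁₃ * k 0 + (-1) * b₁₂ * b₁₂ * k 0 + a₁₃ * b₁₂ * k 2 + (-1) * a₁₃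 * a₂₃ * k 1 + (-2) * a₁₃ * a₁₃ * k 0 + a₁₂ * b₁₂ * k 1) * hsk
  · linear_combination ((-1) * b₁₃ * k 1 * s 0 + b₁₂ * k 2 * s 0 + (-1) * a₂₃ * k 1 * s 0 + a₂₃ * k 0 * s 1 + a₁₃ * k 2 * s 2 + a₁₃ * k 1 * s 1 + a₁₂ * k 2 * s 1 + (-1) * a₁₂ * k 1 * s 2) * h1 + ((-1) * b₁₃ * k 1 * s 1 + (-1) * b₁₃ * k 0 * s 0 + b₁₂ * k 2 * s 1 + a₂₃ * k 1 * s 1 + 2 * a₁₃ * k 1 * s 0 + (-1) * a₁₃ * k 0 * s 1 + (-1) * a₁₂ * k 2 * s 0 + a₁₂ * k 0 * s 2) * h2 + (b₁₃ * k 2 * s 1 + b₁₂ * k 1 * s 1 + b₁₂ * k 0 * s 0 + (-1) * a₂₃ * k 2 * s 1 + a₂₃ * k 1 * s 2 + a₁₃ * k 0 * s 2 + (-1) * a₁₂ * k 1 * s 0 + a₁₂ * k 0 * s 1) * h3 + ((-1) * a₂₃ * a₂₃ * k 1 + a₁₃ * b₁₃ * k 0 + (-2) * a₁₃ * a₁₃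 * k 1 + a₁₂ * b₁₂ * k 0 + a₁₂ * a₁₃ * k 2 + (-1) * a₁₂ * a₁₂ * k 1) * hsk
  · linear_combination ((-1) * a₂₃ * k 2 * s 0 + a₂₃ * k 0 * s 2 + a₁₃ * k 2 * s 1 + (-1) * a₁₃ * k 1 * s 2) * h1 + ((-1) * b₁₃ * k 1 * s 2 + b₁₂ * k 2 * s 2 + b₁₂ * k 0 * s 0 + a₂₃ * k 2 * s 1 + a₁₃ * k 2 * s 0 + (-1) * a₁₃ * k 0 * s 2 + (-1) * a₁₂ * k 0 * s 1) * h2 + (b₁₃ * k 2 * s 2 + b₁₃ * k 0 * s 0 + b₁₂ * k 1 * s 2 + (-1) * a₁₃ * k 0 * s 1 + (-1) * a₁₂ * k 2 * s 0 + a₁₂ * k 0 * s 2) * h3 + ((-1) * a₂₃ * a₂₃ * k 2 + (-1) * a₁₃ * b₁₂ * k 0 + (-1) * a₁₃ * a₁₃ * k 2 + a₁₂ * b₁₃ * k 0 + (-1) * a₁₂ * a₁₂ * k 2) * hsk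

lemma lemAnti (k s : Fin 3 → ℝ)
    (h1 : -(a₂₃ * k 0) + a₁₃ * k 1 - a₁₂ * k 2 = 0)
    (h2 : a₁₃ * k 0 + b₁₃ * k 1 - b₁₂ * k 2 = 0)
    (h3 : -(a₁₂ * k 0) - b₁₂ * k 1 + (a₂₃ - b₁₃) * k 2 = 0) :
    harmBracket a₁₂ a₁₃ a₂₃ b₁₂ b₁₃ k (cp k s)
      = -(cp k (harmBracket a₁₂ a₁₃ a₂₃ b₁₂ b₁₃ k s)) := by
  funext i
  fin_cases i <;> simp [harmBracket, cp]
  · linear_combination (k 1 * s 0 + (-1) * k 0 * s 1) * h2 + (k 2 * s 0 + (-1) * k 0 * s 2) * h3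
  · linear_combination ((-1) * k 1 * s 0 + k 0 * s 1) * h1 + (k 2 * s 1 + (-1) * k 1 * s 2) * h3
  · linear_combination ((-1) * k 2 * s 0 + k 0 * s 2) * h1 + ((-1) * k 2 * s 1 + k 1 * s 2) * h2

lemma lemPerp (k x y : Fin 3 → ℝ)
    (h1 : -(a₂₃ * k 0) + a₁₃ * k 1 - a₁₂ * k 2 = 0)
    (h2 : a₁₃ * k 0 + b₁₃ * k 1 - b₁₂ * k 2 = 0)
    (h3 : -(a₁₂ * k 0) - b₁₂ * k 1 + (a₂₃ - b₁₃) * k 2 = 0)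
    (hN : k 0 ^ 2 + k 1 ^ 2 + k 2 ^ 2 ≠ 0)
    (hxk : x 0 * k 0 + x 1 * k 1 + x 2 * k 2 = 0)
    (hyk : y 0 * k 0 + y 1 * k 1 + y 2 * k 2 = 0) :
    harmBracket a₁₂ a₁₃ a₂₃ b₁₂ b₁₃ x y = 0 := by
  have key : ∀ i : Fin 3, (k 0 ^ 2 + k 1 ^ 2 + k 2 ^ 2) * harmBracket a₁₂ a₁₃ a₂₃ b₁₂ b₁₃ x y i = 0 := by
    intro i
    fin_cases i <;> simp [harmBracket, -mul_eq_zero]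
    · linear_combination ((-1) * k 2 * x 1 * y 0 + k 2 * x 0 * y 1 + k 1 * x 2 * y 0 + (-1) * k 1 * x 0 * y 2 + (-1) * k 0 * x 2 * y 1 + k 0 * x 1 * y 2) * h1 + ((-1) * a₂₃ * k 2 * x 1 + a₂₃ * k 1 * x 2 + (-1) * a₁₃ * k 2 * x 0 + a₁₃ * k 0 * x 2 + (-1) * a₁₂ * k 1 * x 0 + a₁₂ * k 0 * x 1) * hyk + (a₂₃ * k 2 * y 1 + (-1) * a₂₃ * k 1 * y 2 + a₁₃ * k 2 * y 0 + (-1) * a₁₃ * k 0 * y 2 + a₁₂ * k 1 * y 0 + (-1) * a₁₂ * k 0 * y 1) * hxk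
    · linear_combination ((-1) * k 2 * x 1 * y 0 + k 2 * x 0 * y 1 + k 1 * x 2 * y 0 + (-1) * k 1 * x 0 * y 2 + (-1) * k 0 * x 2 * y 1 + k 0 * x 1 * y 2) * h2 + ((-1) * b₁₃ * k 2 * x 0 + b₁₃ * k 0 * x 2 + (-1) * b₁₂ * k 1 * x 0 + b₁₂ * k 0 * x 1 + a₁₃ * k 2 * x 1 + (-1) * a₁₃ * k 1 * x 2) * hyk + (b₁₃ * k 2 * y 0 + (-1) * b₁₃ * k 0 * y 2 + b₁₂ * k 1 * y 0 + (-1) * b₁₂ * k 0 * y 1 + (-1) * a₁₃ * k 2 * y 1 + a₁₃ * k 1 * y 2) * hxk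
    · linear_combination ((-1) * k 2 * x 1 * y 0 + k 2 * x 0 * y 1 + k 1 * x 2 * y 0 + (-1) * k 1 * x 0 * y 2 + (-1) * k 0 * x 2 * y 1 + k 0 * x 1 * y 2) * h3 + ((-1) * b₁₃ * k 1 * x 0 + b₁₃ * k 0 * x 1 + b₁₂ * k 2 * x 0 + (-1) * b₁₂ * k 0 * x 2 + a₂₃ * k 1 * x 0 + (-1) * a₂₃ * k 0 * x 1 + (-1) * a₁₂ * k 2 * x 1 + a₁₂ * k 1 * x 2) * hyk + (b₁₃ * k 1 * y 0 + (-1) * b₁₃ * k 0 * y 1 + (-1) * b₁₂ * k 2 * y 0 + b₁₂ * k 0 * y 2 + (-1) * a₂₃ * k 1 * y 0 + a₂₃ * k 0 * y 1 + a₁₂ * k 2 * y 1 + (-1) * a₁₂ * k 1 * y 2) * hxk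
  funext i
  rcases mul_eq_zero.mp (key i) with h | h
  · exact absurd h hN
  · simpa using h

end HarmAux

namespace HarmAux

lemma final (a₁₂ a₁₃ a₂₃ b₁₂ b₁₃ μ : ℝ) (k s t : Fin 3 → ℝ)
    (h1 : -(a₂₃ * k 0) + a₁₃ * k 1 - a₁₂ * k 2 = 0)
    (h2 : a₁₃ * k 0 + b₁₃ * k 1 - b₁₂ * k 2 = 0)
    (h3 : -(a₁₂ * k 0) - b₁₂ * k 1 + (a₂₃ - b₁₃) * k 2 = 0)
    (hk : k ≠ 0) (hμ : 0 < μ)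
    (hN : k 0 ^ 2 + k 1 ^ 2 + k 2 ^ 2 ≠ 0)
    (hsk : s 0 * k 0 + s 1 * k 1 + s 2 * k 2 = 0)
    (htk : t 0 * k 0 + t 1 * k 1 + t 2 * k 2 = 0)
    (hAs : harmBracket a₁₂ a₁₃ a₂₃ b₁₂ b₁₃ k (harmBracket a₁₂ a₁₃ a₂₃ b₁₂ b₁₃ k s) = (μ ^ 2) • s)
    (hAt : harmBracket a₁₂ a₁₃ a₂₃ b₁₂ b₁₃ k (harmBracket a₁₂ a₁₃ a₂₃ b₁₂ b₁₃ k t) = (μ ^ 2) • t)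
    (hx : harmBracket a₁₂ a₁₃ a₂₃ b₁₂ b₁₃ k s + μ • s ≠ 0)
    (hy : harmBracket a₁₂ a₁₃ a₂₃ b₁₂ b₁₃ k t - μ • t ≠ 0) :
    ∃ b : Module.Basis (Fin 3) ℝ (Fin 3 → ℝ),
      harmBracket a₁₂ a₁₃ a₂₃ b₁₂ b₁₃ (b 0) (b 1) = 0 ∧
        harmBracket a₁₂ a₁₃ a₂₃ b₁₂ b₁₃ (b 2) (b 0) = b 0 ∧
        harmBracket a₁₂ a₁₃ a₂₃ b₁₂ b₁₃ (b 2) (b 1) = -b 1 := by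
  set x : Fin 3 → ℝ := harmBracket a₁₂ a₁₃ a₂₃ b₁₂ b₁₃ k s + μ • s with hxdef
  set y : Fin 3 → ℝ := harmBracket a₁₂ a₁₃ a₂₃ b₁₂ b₁₃ k t - μ • t with hydef
  set z : Fin 3 → ℝ := μ⁻¹ • k with hzdef
  have hμne : μ ≠ 0 := hμ.ne'
  have hkx : harmBracket a₁₂ a₁₃ a₂₃ b₁₂ b₁₃ k x = μ • x := by
    rw [hxdef, hb_add_right, hb_smul_right, hAs]
    module
  have hky : harmBracket a₁₂ a₁₃ a₂₃ b₁₂ b₁₃ k y = -(μ • y) := by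
    rw [hydef, hb_sub_right, hb_smul_right, hAt]
    module
  have hzx : harmBracket a₁₂ a₁₃ a₂₃ b₁₂ b₁₃ z x = x := by
    rw [hzdef, hb_smul_left, hkx, smul_smul, inv_mul_cancel₀ hμne, one_smul]
  have hzy : harmBracket a₁₂ a₁₃ a₂₃ b₁₂ b₁₃ z y = -y := by
    rw [hzdef, hb_smul_left, hky, smul_neg, smul_smul, inv_mul_cancel₀ hμne, one_smul]
  have hds := lemDot (a₁₂ := a₁₂) (a₁₃ := a₁₃) (a₂₃ := a₂₃) (b₁₂ := b₁₂) (b₁₃ := b₁₃) k s h1 h2 h3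
  have hdt := lemDot (a₁₂ := a₁₂) (a₁₃ := a₁₃) (a₂₃ := a₂₃) (b₁₂ := b₁₂) (b₁₃ := b₁₃) k t h1 h2 h3
  have hxk : x 0 * k 0 + x 1 * k 1 + x 2 * k 2 = 0 := by
    rw [hxdef]
    simp only [Pi.add_apply, Pi.smul_apply, smul_eq_mul]
    linear_combination hds + μ * hsk
  have hyk : y 0 * k 0 + y 1 * k 1 + y 2 * k 2 = 0 := by
    rw [hydef]
    simp only [Pi.sub_apply, Pi.smul_apply, smul_eq_mul]
    linear_combination hdt - μ * htk
  have hbxy : harmBracket a₁₂ a₁₃ a₂₃ b₁₂ b₁₃ x y = 0 := lemPerp k x y h1 h2 h3 hN hxk hyk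
  have hzne : z ≠ 0 := smul_ne_zero (inv_ne_zero hμne) hk
  have li : LinearIndependent ℝ ![x, y, z] := by
    rw [Fintype.linearIndependent_iff]
    intro g hg
    have hsum : g 0 • x + g 1 • y + g 2 • z = 0 := by
      simpa [Fin.sum_univ_three] using hg
    have e1 : g 0 • x - g 1 • y = 0 := by
      have := congrArg (harmBracket a₁₂ a₁₃ a₂₃ b₁₂ b₁₃ z) hsum
      rw [hb_zero_right, hb_add_right, hb_add_right, hb_smul_right, hb_smul_right, hb_smul_right,
        hzx, hzy, hzdef, hb_smul_right, hb_smul_left, hb_self] at this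
      rw [← this]
      module
    have e2 : g 0 • x + g 1 • y = 0 := by
      have := congrArg (harmBracket a₁₂ a₁₃ a₂₃ b₁₂ b₁₃ z) e1
      rw [hb_zero_right, hb_sub_right, hb_smul_right, hb_smul_right, hzx, hzy] at this
      rw [← this]
      module
    have hg0 : g 0 = 0 := by
      have h2x : (2 * g 0) • x = 0 := by
        have := congrArg₂ (· + ·) e1 e2
        simpa [two_mul, add_smul] using (by linear_combination (norm := module) e1 + e2 :
          (2 * g 0) • x = 0)
      rcases smul_eq_zero.mp h2x with h | h
      · linarith
      · exact absurd h hx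
    have hg1 : g 1 = 0 := by
      have h2y : g 1 • y = 0 := by
        rw [hg0] at e2; simpa using e2
      rcases smul_eq_zero.mp h2y with h | h
      · exact h
      · exact absurd h hy
    have hg2 : g 2 = 0 := by
      rw [hg0, hg1] at hsum
      simp only [zero_smul, zero_add] at hsum
      rcases smul_eq_zero.mp hsum with h | h
      · exact h
      · exact absurd h hzne
    intro i; fin_cases i <;> assumption
  have card : Fintype.card (Fin 3) = Module.finrank ℝ (Fin 3 → ℝ) := by
    simp [Module.finrank_fin_fun]
  refine ⟨basisOfLinearIndependentOfCardEqFinrank li card, ?_, ?_, ?_⟩ <;>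
      rw [coe_basisOfLinearIndependentOfCardEqFinrank] <;> simp only [Matrix.cons_val_zero,
        Matrix.cons_val_one, Matrix.head_cons, Matrix.cons_val_two, Matrix.tail_cons]
  · exact hbxy
  · exact hzx
  · exact hzy

end HarmAux

namespace HarmAux

lemma cp_ne_zero (k s : Fin 3 → ℝ) (hN : k 0 ^ 2 + k 1 ^ 2 + k 2 ^ 2 ≠ 0)
    (hsne : s ≠ 0) (hsk : s 0 * k 0 + s 1 * k 1 + s 2 * k 2 = 0) : cp k s ≠ 0 := by
  intro h
  have lag : (k 0 ^ 2 + k 1 ^ 2 + k 2 ^ 2) * (s 0 ^ 2 + s 1 ^ 2 + s 2 ^ 2)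
      = cp k s 0 ^ 2 + cp k s 1 ^ 2 + cp k s 2 ^ 2
        + (s 0 * k 0 + s 1 * k 1 + s 2 * k 2) ^ 2 := by
    simp [cp]; ring
  rw [hsk, h] at lag
  simp only [Pi.zero_apply] at lag
  have hss : s 0 ^ 2 + s 1 ^ 2 + s 2 ^ 2 = 0 := by
    rcases mul_eq_zero.mp (by linarith : (k 0 ^ 2 + k 1 ^ 2 + k 2 ^ 2)
        * (s 0 ^ 2 + s 1 ^ 2 + s 2 ^ 2) = 0) with h' | h'
    · exact absurd h' hN
    · exact h'
  have e0 : s 0 = 0 := by nlinarith [sq_nonneg (s 0), sq_nonneg (s 1), sq_nonneg (s 2)]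
  have e1 : s 1 = 0 := by nlinarith [sq_nonneg (s 0), sq_nonneg (s 1), sq_nonneg (s 2)]
  have e2 : s 2 = 0 := by nlinarith [sq_nonneg (s 0), sq_nonneg (s 1), sq_nonneg (s 2)]
  apply hsne
  funext i; fin_cases i <;> simp [e0, e1, e2]

lemma master (a₁₂ a₁₃ a₂₃ b₁₂ b₁₃ : ℝ) (k : Fin 3 → ℝ)
    (h1 : -(a₂₃ * k 0) + a₁₃ * k 1 - a₁₂ * k 2 = 0)
    (h2 : a₁₃ * k 0 + b₁₃ * k 1 - b₁₂ * k 2 = 0)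
    (h3 : -(a₁₂ * k 0) - b₁₂ * k 1 + (a₂₃ - b₁₃) * k 2 = 0)
    (hk : k ≠ 0)
    (hT : 0 < a₂₃ ^ 2 + b₁₃ ^ 2 + (a₂₃ - b₁₃) ^ 2 + 2 * (a₁₃ ^ 2 + a₁₂ ^ 2 + b₁₂ ^ 2)) :
    ∃ b : Module.Basis (Fin 3) ℝ (Fin 3 → ℝ),
      harmBracket a₁₂ a₁₃ a₂₃ b₁₂ b₁₃ (b 0) (b 1) = 0 ∧
        harmBracket a₁₂ a₁₃ a₂₃ b₁₂ b₁₃ (b 2) (b 0) = b 0 ∧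
        harmBracket a₁₂ a₁₃ a₂₃ b₁₂ b₁₃ (b 2) (b 1) = -b 1 := by
  classical
  have hNpos : 0 < k 0 ^ 2 + k 1 ^ 2 + k 2 ^ 2 := by
    obtain ⟨i, hi⟩ := Function.ne_iff.mp hk
    have hi' : k i ≠ 0 := by simpa using hi
    have hsq : 0 < k i ^ 2 := by positivity
    have hle : k i ^ 2 ≤ k 0 ^ 2 + k 1 ^ 2 + k 2 ^ 2 := by
      fin_cases i <;> simp <;>
        nlinarith [sq_nonneg (k 0), sq_nonneg (k 1), sq_nonneg (k 2)]
    linarith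
  have hN : k 0 ^ 2 + k 1 ^ 2 + k 2 ^ 2 ≠ 0 := hNpos.ne'
  set M : ℝ := (a₂₃ ^ 2 + b₁₃ ^ 2 + (a₂₃ - b₁₃) ^ 2 + 2 * (a₁₃ ^ 2 + a₁₂ ^ 2 + b₁₂ ^ 2))
      * (k 0 ^ 2 + k 1 ^ 2 + k 2 ^ 2) / 2 with hMdef
  have hMpos : 0 < M := by rw [hMdef]; positivity
  set μ : ℝ := Real.sqrt M with hμdef
  have hμpos : 0 < μ := Real.sqrt_pos.mpr hMpos
  have hμ2 : μ ^ 2 = M := Real.sq_sqrt hMpos.le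
  -- choose a nonzero vector s orthogonal to k
  obtain ⟨s, hsne, hsk⟩ : ∃ s : Fin 3 → ℝ, s ≠ 0 ∧ s 0 * k 0 + s 1 * k 1 + s 2 * k 2 = 0 := by
    by_cases hk0 : k 0 = 0
    · refine ⟨![0, k 2, -(k 1)], ?_, by simp [hk0]; ring⟩
      intro h
      apply hk
      have e1 := congrFun h 1
      have e2 := congrFun h 2
      simp at e1 e2
      funext i; fin_cases i <;> simp [hk0, e1, e2]
    · refine ⟨![-(k 2), 0, k 0], ?_, by simp; ring⟩
      intro h
      have e2 := congrFun h 2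
      simp at e2
      exact hk0 e2
  have hA2s : harmBracket a₁₂ a₁₃ a₂₃ b₁₂ b₁₃ k (harmBracket a₁₂ a₁₃ a₂₃ b₁₂ b₁₃ k s)
      = (μ ^ 2) • s := by
    rw [hμ2, hMdef]; exact lemA2 k s h1 h2 h3 hsk
  by_cases hxA : harmBracket a₁₂ a₁₃ a₂₃ b₁₂ b₁₃ k s + μ • s ≠ 0
  · by_cases hyA : harmBracket a₁₂ a₁₃ a₂₃ b₁₂ b₁₃ k s - μ • s ≠ 0
    · exact final a₁₂ a₁₃ a₂₃ b₁₂ b₁₃ μ k s s h1 h2 h3 hk hμpos hN hsk hsk hA2s hA2s hxA hyA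
    · -- case C : A s = μ • s ; use s' = cp k s for the (−μ)-eigenvector
      push_neg at hyA
      have hbks : harmBracket a₁₂ a₁₃ a₂₃ b₁₂ b₁₃ k s = μ • s := by
        have := sub_eq_zero.mp hyA; exact this
      set s' : Fin 3 → ℝ := cp k s with hs'def
      have hs'k : s' 0 * k 0 + s' 1 * k 1 + s' 2 * k 2 = 0 := by
        rw [hs'def]; simp [cp]; ring
      have hbks' : harmBracket a₁₂ a₁₃ a₂₃ b₁₂ b₁₃ k s' = -(μ • s') := by
        rw [hs'def, lemAnti k s h1 h2 h3, hbks, cp_smul_right]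
      have hA2s' : harmBracket a₁₂ a₁₃ a₂₃ b₁₂ b₁₃ k (harmBracket a₁₂ a₁₃ a₂₃ b₁₂ b₁₃ k s')
          = (μ ^ 2) • s' := by
        rw [hbks']
        have : harmBracket a₁₂ a₁₃ a₂₃ b₁₂ b₁₃ k (-(μ • s'))
            = -(μ • harmBracket a₁₂ a₁₃ a₂₃ b₁₂ b₁₃ k s') := by
          rw [← neg_smul, hb_smul_right, neg_smul]
        rw [this, hbks']
        module
      have hs'ne : s' ≠ 0 := cp_ne_zero k s hN hsne hsk
      have hy' : harmBracket a₁₂ a₁₃ a₂₃ b₁₂ b₁₃ k s' - μ • s' ≠ 0 := by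
        rw [hbks']
        intro h
        have : (μ + μ) • s' = 0 := by
          rw [add_smul]
          linear_combination (norm := module) -h
        rcases smul_eq_zero.mp this with h' | h'
        · linarith
        · exact hs'ne h'
      exact final a₁₂ a₁₃ a₂₃ b₁₂ b₁₃ μ k s s' h1 h2 h3 hk hμpos hN hsk hs'k hA2s hA2s' hxA hy'
  · -- case B : A s = -μ • s ; use s' = cp k s for the (+μ)-eigenvector
    push_neg at hxA
    have hbks : harmBracket a₁₂ a₁₃ a₂₃ b₁₂ b₁₃ k s = -(μ • s) := by
      have := hxA
      linear_combination (norm := module) this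
    set s' : Fin 3 → ℝ := cp k s with hs'def
    have hs'k : s' 0 * k 0 + s' 1 * k 1 + s' 2 * k 2 = 0 := by
      rw [hs'def]; simp [cp]; ring
    have hbks' : harmBracket a₁₂ a₁₃ a₂₃ b₁₂ b₁₃ k s' = μ • s' := by
      rw [hs'def, lemAnti k s h1 h2 h3, hbks]
      have : cp k (-(μ • s)) = -(μ • cp k s) := by
        rw [← neg_smul, cp_smul_right, neg_smul]
      rw [this, neg_neg]
    have hA2s' : harmBracket a₁₂ a₁₃ a₂₃ b₁₂ b₁₃ k (harmBracket a₁₂ a₁₃ a₂₃ b₁₂ b₁₃ k s')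
        = (μ ^ 2) • s' := by
      rw [hbks', hb_smul_right, hbks', smul_smul, ← sq]
    have hs'ne : s' ≠ 0 := cp_ne_zero k s hN hsne hsk
    have hx' : harmBracket a₁₂ a₁₃ a₂₃ b₁₂ b₁₃ k s' + μ • s' ≠ 0 := by
      rw [hbks']
      intro h
      have : (μ + μ) • s' = 0 := by
        rw [add_smul]
        linear_combination (norm := module) h
      rcases smul_eq_zero.mp this with h' | h'
      · linarith
      · exact hs'ne h'
    have hy' : harmBracket a₁₂ a₁₃ a₂₃ b₁₂ b₁₃ k s - μ • s ≠ 0 := by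
      rw [hbks]
      intro h
      have : (μ + μ) • s = 0 := by
        rw [add_smul]
        linear_combination (norm := module) -h
      rcases smul_eq_zero.mp this with h' | h'
      · linarith
      · exact hsne h'
    exact final a₁₂ a₁₃ a₂₃ b₁₂ b₁₃ μ k s' s h1 h2 h3 hk hμpos hN hs'k hsk hA2s' hA2s hx' hy'

end HarmAux

/-- Let `C` be the matrix of structure constants below.  If the
parameters are not all zero and `det C = 0`, then `𝔤(a₁₂,a₁₃,a₂₃,b₁₂,b₁₃)` is isomorphic
to `𝔢(1,1)`: there is a basis `x, y, z` with `[x,y] = 0`, `[z,x] = x`, `[z,y] = −y`. -/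
theorem harmBracket_det_eq_zero_e11 (a₁₂ a₁₃ a₂₃ b₁₂ b₁₃ : ℝ)
    (hne : (a₁₂, a₁₃, a₂₃, b₁₂, b₁₃) ≠ (0, 0, 0, 0, 0))
    (hC : (!![-a₁₂, -a₁₃, -a₂₃; -b₁₂, -b₁₃, a₁₃; a₂₃ - b₁₃, b₁₂, -a₁₂] :
      Matrix (Fin 3) (Fin 3) ℝ).det = 0) :
    ∃ b : Module.Basis (Fin 3) ℝ (Fin 3 → ℝ),
      harmBracket a₁₂ a₁₃ a₂₃ b₁₂ b₁₃ (b 0) (b 1) = 0 ∧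
        harmBracket a₁₂ a₁₃ a₂₃ b₁₂ b₁₃ (b 2) (b 0) = b 0 ∧
        harmBracket a₁₂ a₁₃ a₂₃ b₁₂ b₁₃ (b 2) (b 1) = -b 1 := by
  classical
  have hC' : a₂₃ * b₁₃ ^ 2 + a₂₃ * b₁₂ ^ 2 - a₂₃ ^ 2 * b₁₃ + a₁₃ ^ 2 * b₁₃ - a₁₃ ^ 2 * a₂₃
      + 2 * a₁₂ * a₁₃ * b₁₂ - a₁₂ ^ 2 * b₁₃ = 0 := by
    rw [Matrix.det_fin_three] at hC
    simp only [Matrix.cons_val', Matrix.cons_val_zero, Matrix.cons_val_one, Matrix.head_cons,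
      Matrix.empty_val', Matrix.cons_val_fin_one, Matrix.cons_val_two, Matrix.tail_cons,
      Matrix.of_apply, Matrix.head_fin_const] at hC
    linear_combination hC
  have hT : 0 < a₂₃ ^ 2 + b₁₃ ^ 2 + (a₂₃ - b₁₃) ^ 2 + 2 * (a₁₃ ^ 2 + a₁₂ ^ 2 + b₁₂ ^ 2) := by
    by_contra h
    push_neg at h
    have e1 : a₁₂ = 0 := by nlinarith [sq_nonneg a₂₃, sq_nonneg b₁₃, sq_nonneg (a₂₃ - b₁₃), sq_nonneg a₁₃, sq_nonneg a₁₂, sq_nonneg b₁₂]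
    have e2 : a₁₃ = 0 := by nlinarith [sq_nonneg a₂₃, sq_nonneg b₁₃, sq_nonneg (a₂₃ - b₁₃), sq_nonneg a₁₃, sq_nonneg a₁₂, sq_nonneg b₁₂]
    have e3 : a₂₃ = 0 := by nlinarith [sq_nonneg a₂₃, sq_nonneg b₁₃, sq_nonneg (a₂₃ - b₁₃), sq_nonneg a₁₃, sq_nonneg a₁₂, sq_nonneg b₁₂]
    have e4 : b₁₂ = 0 := by nlinarith [sq_nonneg a₂₃, sq_nonneg b₁₃, sq_nonneg (a₂₃ - b₁₃), sq_nonneg a₁₃, sq_nonneg a₁₂, sq_nonneg b₁₂]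
    have e5 : b₁₃ = 0 := by nlinarith [sq_nonneg a₂₃, sq_nonneg b₁₃, sq_nonneg (a₂₃ - b₁₃), sq_nonneg a₁₃, sq_nonneg a₁₂, sq_nonneg b₁₂]
    exact hne (by rw [e1, e2, e3, e4, e5])
  by_cases hm0 : -(b₁₃ * b₁₃) - b₁₂ * b₁₂ + a₂₃ * b₁₃ ≠ 0
  · refine HarmAux.master a₁₂ a₁₃ a₂₃ b₁₂ b₁₃
      ![-(b₁₃ * b₁₃) - b₁₂ * b₁₂ + a₂₃ * b₁₃, a₁₃ * b₁₃ - a₁₃ * a₂₃ + a₁₂ * b₁₂,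
        -(a₁₃ * b₁₂) + a₁₂ * b₁₃] ?_ ?_ ?_ ?_ hT
    · simp only [Matrix.cons_val_zero, Matrix.cons_val_one, Matrix.head_cons, Matrix.cons_val_two, Matrix.tail_cons]
      linear_combination hC'
    · simp only [Matrix.cons_val_zero, Matrix.cons_val_one, Matrix.head_cons, Matrix.cons_val_two, Matrix.tail_cons]
      ring
    · simp only [Matrix.cons_val_zero, Matrix.cons_val_one, Matrix.head_cons, Matrix.cons_val_two, Matrix.tail_cons]
      ring
    · intro h
      apply hm0
      have := congrFun h 0
      simp at this
      linear_combination this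
  push_neg at hm0
  by_cases hm1 : a₂₃ * b₁₃ - a₂₃ * a₂₃ - a₁₂ * a₁₂ ≠ 0
  · refine HarmAux.master a₁₂ a₁₃ a₂₃ b₁₂ b₁₃
      ![a₁₃ * b₁₃ - a₁₃ * a₂₃ + a₁₂ * b₁₂, a₂₃ * b₁₃ - a₂₃ * a₂₃ - a₁₂ * a₁₂,
        -(a₂₃ * b₁₂) - a₁₂ * a₁₃] ?_ ?_ ?_ ?_ hT
    · simp only [Matrix.cons_val_zero, Matrix.cons_val_one, Matrix.head_cons, Matrix.cons_val_two, Matrix.tail_cons]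
      ring
    · simp only [Matrix.cons_val_zero, Matrix.cons_val_one, Matrix.head_cons, Matrix.cons_val_two, Matrix.tail_cons]
      linear_combination hC'
    · simp only [Matrix.cons_val_zero, Matrix.cons_val_one, Matrix.head_cons, Matrix.cons_val_two, Matrix.tail_cons]
      ring
    · intro h
      apply hm1
      have := congrFun h 1
      simp at this
      linear_combination this
  push_neg at hm1
  by_cases hm2 : -(a₂₃ * b₁₃) - a₁₃ * a₁₃ ≠ 0
  · refine HarmAux.master a₁₂ a₁₃ a₂₃ b₁₂ b₁₃
      ![-(a₁₃ * b₁₂) + a₁₂ * b₁₃, -(a₂₃ * b₁₂) - a₁₂ * a₁₃,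
        -(a₂₃ * b₁₃) - a₁₃ * a₁₃] ?_ ?_ ?_ ?_ hT
    · simp only [Matrix.cons_val_zero, Matrix.cons_val_one, Matrix.head_cons, Matrix.cons_val_two, Matrix.tail_cons]
      ring
    · simp only [Matrix.cons_val_zero, Matrix.cons_val_one, Matrix.head_cons, Matrix.cons_val_two, Matrix.tail_cons]
      ring
    · simp only [Matrix.cons_val_zero, Matrix.cons_val_one, Matrix.head_cons, Matrix.cons_val_two, Matrix.tail_cons]
      linear_combination hC'
    · intro h
      apply hm2
      have := congrFun h 2
      simp at this
      linear_combination this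
  push_neg at hm2
  exfalso
  have hzero : a₂₃ ^ 2 + b₁₃ ^ 2 + (a₂₃ - b₁₃) ^ 2 + 2 * (a₁₃ ^ 2 + a₁₂ ^ 2 + b₁₂ ^ 2) = 0 := by
    linear_combination (-2 : ℝ) * hm0 + (-2 : ℝ) * hm1 + (-2 : ℝ) * hm2
  linarith
end

section
/- Let 𝔤 be the three-dimensional real Lie algebra with basis e₁, e₂, e₃ and brackets [e₁,e₂] = 0, [e₃,e₁] = d₁₁e₁ + d₂₁e₂, [e₃,e₂] = d₁₂e₁ + d₂₂e₂, where d₁₁ + d₂₂ = 0 and d₂₁ = d₁₂ and (d₁₁,d₁₂) ≠ (0,0), and let g be the inner product making e₁,e₂,e₃ orthonormal. Set t := √(d₁₁² + d₁₂²). Then there exists a basis x, y, z of 𝔤 with [x,y] = 0, [z,x] = x, [z,y] = −y, which is pairwise g-orthogonal and satisfies g(x,x) = g(y,y) = 1 and g(z,z) = 1/t². In particular 𝔤 is isomorphic to 𝔢(1,1). -/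
/-!
STATEMENT 14: the three-dimensional almost Abelian Riemannian Lie algebras with harmonic
spinors are 𝔢(1,1) with metric diag(1,1,1/t²).
-/

set_option maxHeartbeats 1000000 in
/-- Let `𝔤` be the three-dimensional real Lie algebra with basis
`e₀,e₁,e₂`, brackets `⁅e₀,e₁⁆ = 0`, `⁅e₂,e₀⁆ = d₁₁e₀ + d₂₁e₁`, `⁅e₂,e₁⁆ = d₁₂e₀ + d₂₂e₁`
where `d₁₁ + d₂₂ = 0`, `d₂₁ = d₁₂` and `(d₁₁,d₁₂) ≠ (0,0)`, and let `g` be the inner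
product making `e₀,e₁,e₂` orthonormal.  With `t := √(d₁₁² + d₁₂²)`, there is a pairwise
`g`-orthogonal basis `x, y, z` of `𝔤` with `⁅x,y⁆ = 0`, `⁅z,x⁆ = x`, `⁅z,y⁆ = −y`,
`g(x,x) = g(y,y) = 1` and `g(z,z) = 1/t²`; in particular `𝔤` is isomorphic to `𝔢(1,1)`. -/
theorem almost_abelian_riemannian_harmonic
    {𝔤 : Type} [LieRing 𝔤] [LieAlgebra ℝ 𝔤]
    (e : Module.Basis (Fin 3) ℝ 𝔤)
    (d₁₁ d₁₂ d₂₁ d₂₂ : ℝ)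
    (htr : d₁₁ + d₂₂ = 0) (hsym : d₂₁ = d₁₂) (hne : (d₁₁, d₁₂) ≠ (0, 0))
    (h01 : ⁅e 0, e 1⁆ = 0)
    (h20 : ⁅e 2, e 0⁆ = d₁₁ • e 0 + d₂₁ • e 1)
    (h21 : ⁅e 2, e 1⁆ = d₁₂ • e 0 + d₂₂ • e 1)
    (g : LinearMap.BilinForm ℝ 𝔤)
    (horth : ∀ i j : Fin 3, g (e i) (e j) = if i = j then 1 else 0) :
    ∃ b : Module.Basis (Fin 3) ℝ 𝔤,
      ⁅b 0, b 1⁆ = 0 ∧ ⁅b 2, b 0⁆ = b 0 ∧ ⁅b 2, b 1⁆ = -b 1 ∧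
      (∀ i j : Fin 3, i ≠ j → g (b i) (b j) = 0) ∧
      g (b 0) (b 0) = 1 ∧ g (b 1) (b 1) = 1 ∧
      g (b 2) (b 2) = 1 / Real.sqrt (d₁₁ ^ 2 + d₁₂ ^ 2) ^ 2 := by
  classical
  set t : ℝ := Real.sqrt (d₁₁ ^ 2 + d₁₂ ^ 2) with ht_def
  have hpos : 0 < d₁₁ ^ 2 + d₁₂ ^ 2 := by
    rcases eq_or_ne d₁₁ 0 with h1 | h1
    · rcases eq_or_ne d₁₂ 0 with h2 | h2
      · exact absurd (by rw [h1, h2]) hne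
      · positivity
    · positivity
  have ht : 0 < t := Real.sqrt_pos.mpr hpos
  have htne : t ≠ 0 := ht.ne'
  set w : ℂ := ⟨d₁₁, d₁₂⟩ with hw_def
  have hwne : w ≠ 0 := by
    intro h
    apply hne
    have h1 : w.re = 0 := by rw [h]; rfl
    have h2 : w.im = 0 := by rw [h]; rfl
    exact Prod.ext h1 h2
  have habs : ‖w‖ = t := by
    rw [Complex.norm_def, Complex.normSq_mk, ht_def]
    ring_nf
  set ca : ℝ := Real.cos (w.arg / 2) with hca_def
  set sa : ℝ := Real.sin (w.arg / 2) with hsa_def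
  have hab : sa ^ 2 + ca ^ 2 = 1 := Real.sin_sq_add_cos_sq _
  have hcos : Real.cos w.arg = d₁₁ / t := by
    rw [Complex.cos_arg hwne, habs]
  have hsin : Real.sin w.arg = d₁₂ / t := by
    rw [Complex.sin_arg, habs]
  have hd11 : d₁₁ = t * (ca ^ 2 - sa ^ 2) := by
    have h1 : d₁₁ = t * Real.cos w.arg := by rw [hcos]; field_simp
    rw [show w.arg = 2 * (w.arg / 2) by ring, Real.cos_two_mul] at h1
    linear_combination h1 + t * hab
  have hd12 : d₁₂ = t * (2 * ca * sa) := by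
    have h1 : d₁₂ = t * Real.sin w.arg := by rw [hsin]; field_simp
    rw [show w.arg = 2 * (w.arg / 2) by ring, Real.sin_two_mul] at h1
    linear_combination h1
  have hd22 : d₂₂ = -d₁₁ := by linarith
  set A : Matrix (Fin 3) (Fin 3) ℝ := !![ca, -sa, 0; sa, ca, 0; 0, 0, 1/t] with hA_def
  have hdet' : A.det = 1/t := by
    rw [hA_def, Matrix.det_fin_three]
    norm_num [Matrix.cons_val_two, Matrix.vecHead, Matrix.vecTail]
    linear_combination t⁻¹ * hab
  have hdet : IsUnit A.det := by
    rw [isUnit_iff_ne_zero, hdet']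
    positivity
  refine ⟨e.map (Matrix.toLinearEquiv e A hdet), ?_⟩
  have hb : ∀ i : Fin 3, (e.map (Matrix.toLinearEquiv e A hdet)) i
      = A 0 i • e 0 + A 1 i • e 1 + A 2 i • e 2 := by
    intro i
    rw [Module.Basis.map_apply, Matrix.toLinearEquiv_apply, Matrix.toLin_self,
      Fin.sum_univ_three]
  have hA00 : A 0 0 = ca := rfl
  have hA10 : A 1 0 = sa := rfl
  have hA20 : A 2 0 = 0 := rfl
  have hA01 : A 0 1 = -sa := rfl
  have hA11 : A 1 1 = ca := rfl
  have hA21 : A 2 1 = 0 := rfl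
  have hA02 : A 0 2 = 0 := rfl
  have hA12 : A 1 2 = 0 := rfl
  have hA22 : A 2 2 = 1/t := rfl
  have hb0 : (e.map (Matrix.toLinearEquiv e A hdet)) 0 = ca • e 0 + sa • e 1 := by
    rw [hb 0, hA00, hA10, hA20]; module
  have hb1 : (e.map (Matrix.toLinearEquiv e A hdet)) 1 = (-sa) • e 0 + ca • e 1 := by
    rw [hb 1, hA01, hA11, hA21]; module
  have hb2 : (e.map (Matrix.toLinearEquiv e A hdet)) 2 = (1/t) • e 2 := by
    rw [hb 2, hA02, hA12, hA22]; module
  have h10 : ⁅e 1, e 0⁆ = 0 := by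
    rw [← lie_skew, h01, neg_zero]
  have gb : ∀ (p q r u v s : ℝ),
      g (p • e 0 + q • e 1 + r • e 2) (u • e 0 + v • e 1 + s • e 2)
        = p * u + q * v + r * s := by
    intro p q r u v s
    simp only [map_add, map_smul, LinearMap.add_apply, LinearMap.smul_apply, horth]
    norm_num [Fin.ext_iff]
    ring
  have gb' : ∀ (p q u v : ℝ),
      g (p • e 0 + q • e 1) (u • e 0 + v • e 1) = p * u + q * v := by
    intro p q u v
    have := gb p q 0 u v 0
    simpa using this
  refine ⟨?_, ?_, ?_, ?_, ?_, ?_, ?_⟩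
  · rw [hb0, hb1]
    simp only [lie_add, add_lie, smul_lie, lie_smul, h01, h10, lie_self, smul_zero]
    simp
  · rw [hb2, hb0]
    simp only [lie_add, smul_lie, lie_smul, h20, h21, hsym, hd22, smul_add, smul_smul]
    match_scalars
    · field_simp
      first
        | linear_combination ca * hd11 + sa * hd12 + t * ca * hab
        | linear_combination -(ca * hd11 + sa * hd12 + t * ca * hab)
    · field_simp
      first
        | linear_combination ca * hd12 - sa * hd11 + t * sa * hab
        | linear_combination -(ca * hd12 - sa * hd11 + t * sa * hab)
  · rw [hb2, hb1]
    simp only [lie_add, smul_lie, lie_smul, h20, h21, hsym, hd22, smul_add, smul_smul,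
      neg_smul, lie_neg, smul_neg, neg_neg, neg_add]
    match_scalars <;> field_simp <;>
      first
        | linear_combination ca * hd12 - sa * hd11 + t * sa * hab
        | linear_combination -(ca * hd12 - sa * hd11 + t * sa * hab)
        | linear_combination -(sa * hd12) - ca * hd11 - t * ca * hab
        | linear_combination sa * hd12 + ca * hd11 + t * ca * hab
        | linear_combination t * ca * hd12 - t * sa * hd11 + t ^ 2 * sa * hab
        | linear_combination -(t * sa * hd12) - t * ca * hd11 - t ^ 2 * ca * hab
        | ring
  · have g01 : g (ca • e 0 + sa • e 1) ((-sa) • e 0 + ca • e 1) = 0 := by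
      rw [gb']; ring
    have g10 : g ((-sa) • e 0 + ca • e 1) (ca • e 0 + sa • e 1) = 0 := by
      rw [gb']; ring
    have g02 : g (ca • e 0 + sa • e 1) ((1/t) • e 2) = 0 := by
      have := gb ca sa 0 0 0 (1/t)
      simpa using this
    have g12 : g ((-sa) • e 0 + ca • e 1) ((1/t) • e 2) = 0 := by
      have := gb (-sa) ca 0 0 0 (1/t)
      simpa using this
    have g20 : g ((1/t) • e 2) (ca • e 0 + sa • e 1) = 0 := by
      have := gb 0 0 (1/t) ca sa 0
      simpa using this
    have g21 : g ((1/t) • e 2) ((-sa) • e 0 + ca • e 1) = 0 := by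
      have := gb 0 0 (1/t) (-sa) ca 0
      simpa using this
    intro i j hij
    fin_cases i <;> fin_cases j <;>
      simp only [Fin.zero_eta, Fin.mk_one, show (⟨2, by omega⟩ : Fin 3) = 2 from rfl] at hij ⊢ <;>
      first
        | exact absurd rfl hij
        | (rw [hb0, hb1]; exact g01)
        | (rw [hb1, hb0]; exact g10)
        | (rw [hb0, hb2]; exact g02)
        | (rw [hb1, hb2]; exact g12)
        | (rw [hb2, hb0]; exact g20)
        | (rw [hb2, hb1]; exact g21)
  · rw [hb0, gb']
    linear_combination hab
  · rw [hb1, gb']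
    linear_combination hab
  · rw [hb2]
    have := gb 0 0 (1/t) 0 0 (1/t)
    simp only [zero_smul, zero_add] at this
    rw [this]
    ring
end

section
/- For all real numbers a₁₂, a₁₃, a₂₃, b₁₂, b₁₃, b₂₃, c₁₂, c₁₃, c₂₃ satisfying the unimodularity relations b₂₃ = −a₁₃, c₁₃ = −b₁₂ and c₂₃ = a₁₂, the complex 2×2 matrix N := [[−2(a₁₃+b₂₃)+i(a₂₃−b₁₃−c₁₂), −2(a₁₂−c₂₃)+2i(b₁₂+c₁₃)], [2(a₁₂−c₂₃)+2i(b₁₂+c₁₃), 2(a₁₃+b₂₃)+i(a₂₃−b₁₃−c₁₂)]] equals i(a₂₃−b₁₃−c₁₂)·Id, so that det N = 0 if and only if c₁₂ = a₂₃ − b₁₃, if and only if N = 0. -/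
/-!
STATEMENT 15: the matrix of the Lorentzian Dirac operator in the unimodular case.
-/

open Matrix Complex

/-- Under the unimodularity relations `b₂₃ = −a₁₃`, `c₁₃ = −b₁₂`,
`c₂₃ = a₁₂`, the complex `2×2` matrix `N` below equals `i(a₂₃−b₁₃−c₁₂)·Id`, so that
`det N = 0` iff `c₁₂ = a₂₃ − b₁₃`, iff `N = 0`. -/
theorem dirac_matrix_lorentzian_unimodular
    (a₁₂ a₁₃ a₂₃ b₁₂ b₁₃ b₂₃ c₁₂ c₁₃ c₂₃ : ℝ)
    (hb : b₂₃ = -a₁₃) (hc13 : c₁₃ = -b₁₂) (hc23 : c₂₃ = a₁₂) :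
    letI N : Matrix (Fin 2) (Fin 2) ℂ :=
      !![(-(2 * (a₁₃ + b₂₃)) : ℝ) + (a₂₃ - b₁₃ - c₁₂ : ℝ) * I,
          (-(2 * (a₁₂ - c₂₃)) : ℝ) + (2 * (b₁₂ + c₁₃) : ℝ) * I;
        (2 * (a₁₂ - c₂₃) : ℝ) + (2 * (b₁₂ + c₁₃) : ℝ) * I,
          (2 * (a₁₃ + b₂₃) : ℝ) + (a₂₃ - b₁₃ - c₁₂ : ℝ) * I]
    N = (((a₂₃ - b₁₃ - c₁₂ : ℝ) : ℂ) * I) • (1 : Matrix (Fin 2) (Fin 2) ℂ) ∧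
      (N.det = 0 ↔ c₁₂ = a₂₃ - b₁₃) ∧
      (N.det = 0 ↔ N = 0) := by
  subst hb hc13 hc23
  set t : ℝ := a₂₃ - b₁₃ - c₁₂ with ht
  have key : ∀ M : Matrix (Fin 2) (Fin 2) ℂ,
      M = ((t : ℂ) * I) • (1 : Matrix (Fin 2) (Fin 2) ℂ) →
      (M = ((t : ℂ) * I) • (1 : Matrix (Fin 2) (Fin 2) ℂ) ∧
        (M.det = 0 ↔ c₁₂ = a₂₃ - b₁₃) ∧ (M.det = 0 ↔ M = 0)) := by
    intro M hM
    have hdet : M.det = -(t : ℂ) ^ 2 := by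
      rw [hM]
      simp only [Matrix.det_smul, det_one, mul_one, Fintype.card_fin, mul_pow, I_sq]
      push_cast
      ring
    have hcz : (t : ℂ) = 0 ↔ c₁₂ = a₂₃ - b₁₃ := by
      constructor
      · intro h
        have ht0 : t = 0 := by exact_mod_cast h
        have := ht ▸ ht0
        linarith
      · intro h
        have : t = 0 := by rw [ht]; linarith
        exact_mod_cast congrArg (fun x : ℝ => (x : ℂ)) this
    have hd0 : M.det = 0 ↔ (t : ℂ) = 0 := by
      rw [hdet]
      constructor
      · intro h
        have h2 : (t : ℂ) ^ 2 = 0 := by linear_combination -h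
        exact pow_eq_zero_iff (n := 2) (by norm_num) |>.mp h2
      · intro h; simp [h]
    refine ⟨hM, hd0.trans hcz, hd0.trans ?_⟩
    constructor
    · intro h; rw [hM, h]; simp
    · intro h
      rw [hM] at h
      rcases smul_eq_zero.mp h with h1 | h2
      · rcases mul_eq_zero.mp h1 with h3 | h4
        · exact h3
        · exact absurd h4 I_ne_zero
      · exact absurd h2 one_ne_zero
  refine key _ ?_
  ext i j
  fin_cases i <;> fin_cases j <;>
    simp [Matrix.one_apply] <;> push_cast <;> ring
end

section
/- Let 𝔰𝔲(2) have basis x, y, z with [x,y] = 2z, [z,x] = 2y, [z,y] = −2x, and for μ₁, μ₂, μ₃ > 0 let g be the symmetric bilinear form with g(x,x) = μ₁, g(y,y) = μ₂, g(z,z) = −μ₃ and g(x,y) = g(x,z) = g(y,z) = 0, with orthonormal basis e₁ = x/√μ₁, e₂ = y/√μ₂, e₃ = z/√μ₃ (e₃ timelike). Then there exist real numbers a₁₂, a₁₃, a₂₃, b₁₂, b₁₃ such that the brackets of (e₁,e₂,e₃) coincide with those of 𝔤ᴸ(a₁₂,a₁₃,a₂₃,b₁₂,b₁₃) if and only if μ₃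 = μ₁ + μ₂. -/
set_option maxHeartbeats 1600000

private lemma basis_coeff_eq {𝔤 : Type} [AddCommGroup 𝔤] [Module ℝ 𝔤]
    (v : Module.Basis (Fin 3) ℝ 𝔤) {c0 c1 c2 d0 d1 d2 : ℝ}
    (h : c0 • v 0 + c1 • v 1 + c2 • v 2 = d0 • v 0 + d1 • v 1 + d2 • v 2) :
    c0 = d0 ∧ c1 = d1 ∧ c2 = d2 := by
  have hli := v.linearIndependent
  rw [Fintype.linearIndependent_iff] at hli
  have h0 : (c0 - d0) • v 0 + (c1 - d1) • v 1 + (c2 - d2) • v 2 = 0 := by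
    simp only [sub_smul]; rw [← sub_eq_zero] at h; rw [← h]; abel
  have := hli ![c0 - d0, c1 - d1, c2 - d2] (by
    rw [Fin.sum_univ_three]; simpa using h0)
  have e0 := this 0; have e1 := this 1; have e2 := this 2
  simp at e0 e1 e2
  exact ⟨by linarith, by linarith, by linarith⟩

/-- Let `𝔰𝔲(2)` have basis `x = v 0`, `y = v 1`, `z = v 2` with
`⁅x,y⁆ = 2z`, `⁅z,x⁆ = 2y`, `⁅z,y⁆ = −2x`, and for `μ₁, μ₂, μ₃ > 0` consider the
orthonormal basis `e₁ = x/√μ₁`, `e₂ = y/√μ₂`, `e₃ = z/√μ₃` of the Lorentzian metric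
`diag(μ₁,μ₂,−μ₃)` (with `e₃` timelike).  Then there exist reals `a₁₂,a₁₃,a₂₃,b₁₂,b₁₃`
such that the brackets of `(e₁,e₂,e₃)` coincide with those of `𝔤ᴸ(a₁₂,a₁₃,a₂₃,b₁₂,b₁₃)`
if and only if `μ₃ = μ₁ + μ₂`. -/
theorem su2_lorentzian_harmonic_iff
    {𝔤 : Type} [LieRing 𝔤] [LieAlgebra ℝ 𝔤]
    (v : Module.Basis (Fin 3) ℝ 𝔤)
    (hxy : ⁅v 0, v 1⁆ = (2 : ℝ) • v 2)
    (hzx : ⁅v 2, v 0⁆ = (2 : ℝ) • v 1)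
    (hzy : ⁅v 2, v 1⁆ = (-2 : ℝ) • v 0)
    (μ₁ μ₂ μ₃ : ℝ) (hμ₁ : 0 < μ₁) (hμ₂ : 0 < μ₂) (hμ₃ : 0 < μ₃) :
    (∃ a₁₂ a₁₃ a₂₃ b₁₂ b₁₃ : ℝ,
        ⁅(Real.sqrt μ₁)⁻¹ • v 0, (Real.sqrt μ₂)⁻¹ • v 1⁆ =
            -a₁₂ • ((Real.sqrt μ₁)⁻¹ • v 0) - b₁₂ • ((Real.sqrt μ₂)⁻¹ • v 1) -
              (a₂₃ - b₁₃) • ((Real.sqrt μ₃)⁻¹ • v 2) ∧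
          ⁅(Real.sqrt μ₁)⁻¹ • v 0, (Real.sqrt μ₃)⁻¹ • v 2⁆ =
            -a₁₃ • ((Real.sqrt μ₁)⁻¹ • v 0) - b₁₃ • ((Real.sqrt μ₂)⁻¹ • v 1) +
              b₁₂ • ((Real.sqrt μ₃)⁻¹ • v 2) ∧
          ⁅(Real.sqrt μ₂)⁻¹ • v 1, (Real.sqrt μ₃)⁻¹ • v 2⁆ =
            -a₂₃ • ((Real.sqrt μ₁)⁻¹ • v 0) + a₁₃ • ((Real.sqrt μ₂)⁻¹ • v 1) -
              a₁₂ • ((Real.sqrt μ₃)⁻¹ • v 2)) ↔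
      μ₃ = μ₁ + μ₂ := by
  set s1 := Real.sqrt μ₁ with hs1def
  set s2 := Real.sqrt μ₂ with hs2def
  set s3 := Real.sqrt μ₃ with hs3def
  have hp1 : 0 < s1 := Real.sqrt_pos.2 hμ₁
  have hp2 : 0 < s2 := Real.sqrt_pos.2 hμ₂
  have hp3 : 0 < s3 := Real.sqrt_pos.2 hμ₃
  have hq1 : s1 ^ 2 = μ₁ := Real.sq_sqrt hμ₁.le
  have hq2 : s2 ^ 2 = μ₂ := Real.sq_sqrt hμ₂.le
  have hq3 : s3 ^ 2 = μ₃ := Real.sq_sqrt hμ₃.le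
  clear_value s1 s2 s3
  have k1 : ⁅s1⁻¹ • v 0, s2⁻¹ • v 1⁆ = (s1⁻¹ * (s2⁻¹ * 2)) • v 2 := by
    rw [smul_lie, lie_smul, hxy, smul_smul, smul_smul, mul_assoc]
  have k2 : ⁅s1⁻¹ • v 0, s3⁻¹ • v 2⁆ = (s1⁻¹ * (s3⁻¹ * (-2))) • v 1 := by
    have h02 : ⁅v 0, v 2⁆ = (-2 : ℝ) • v 1 := by
      have := lie_skew (v 2) (v 0)
      rw [hzx] at this
      exact neg_injective (by rw [this]; module)
    rw [smul_lie, lie_smul, h02, smul_smul, smul_smul, mul_assoc]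
  have k3 : ⁅s2⁻¹ • v 1, s3⁻¹ • v 2⁆ = (s2⁻¹ * (s3⁻¹ * 2)) • v 0 := by
    have h12 : ⁅v 1, v 2⁆ = (2 : ℝ) • v 0 := by
      have := lie_skew (v 2) (v 1)
      rw [hzy] at this
      exact neg_injective (by rw [this]; module)
    rw [smul_lie, lie_smul, h12, smul_smul, smul_smul, mul_assoc]
  constructor
  · rintro ⟨a₁₂, a₁₃, a₂₃, b₁₂, b₁₃, h1, h2, h3⟩
    rw [k1] at h1; rw [k2] at h2; rw [k3] at h3
    have H1 : (0:ℝ) • v 0 + (0:ℝ) • v 1 + (s1⁻¹ * (s2⁻¹ * 2)) • v 2 =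
        (-a₁₂ * s1⁻¹) • v 0 + (-b₁₂ * s2⁻¹) • v 1 + (-(a₂₃ - b₁₃) * s3⁻¹) • v 2 := by
      rw [show ((0:ℝ) • v 0 + (0:ℝ) • v 1 + (s1⁻¹ * (s2⁻¹ * 2)) • v 2 : 𝔤) =
          (s1⁻¹ * (s2⁻¹ * 2)) • v 2 by module, h1]; module
    have H2 : (0:ℝ) • v 0 + (s1⁻¹ * (s3⁻¹ * (-2))) • v 1 + (0:ℝ) • v 2 =
        (-a₁₃ * s1⁻¹) • v 0 + (-b₁₃ * s2⁻¹) • v 1 + (b₁₂ * s3⁻¹) • v 2 := by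
      rw [show ((0:ℝ) • v 0 + (s1⁻¹ * (s3⁻¹ * (-2))) • v 1 + (0:ℝ) • v 2 : 𝔤) =
          (s1⁻¹ * (s3⁻¹ * (-2))) • v 1 by module, h2]; module
    have H3 : (s2⁻¹ * (s3⁻¹ * 2)) • v 0 + (0:ℝ) • v 1 + (0:ℝ) • v 2 =
        (-a₂₃ * s1⁻¹) • v 0 + (a₁₃ * s2⁻¹) • v 1 + (-a₁₂ * s3⁻¹) • v 2 := by
      rw [show ((s2⁻¹ * (s3⁻¹ * 2)) • v 0 + (0:ℝ) • v 1 + (0:ℝ) • v 2 : 𝔤) =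
          (s2⁻¹ * (s3⁻¹ * 2)) • v 0 by module, h3]; module
    obtain ⟨_, _, A3⟩ := basis_coeff_eq v H1
    obtain ⟨_, B2, _⟩ := basis_coeff_eq v H2
    obtain ⟨C1, _, _⟩ := basis_coeff_eq v H3
    have hA : 2 * s3 = (b₁₃ - a₂₃) * (s1 * s2) := by
      field_simp at A3; linarith
    have hB : 2 * s2 = b₁₃ * (s1 * s3) := by
      field_simp at B2; linarith
    have hC : 2 * s1 = -a₂₃ * (s2 * s3) := by
      field_simp at C1; linarith
    have key : s3 ^ 2 = s1 ^ 2 + s2 ^ 2 := by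
      have e1 : 2 * s3 * s3 = (b₁₃ - a₂₃) * (s1 * s2) * s3 := by rw [← hA]
      have e2 : 2 * s2 * s2 = b₁₃ * (s1 * s3) * s2 := by rw [← hB]
      have e3 : 2 * s1 * s1 = -a₂₃ * (s2 * s3) * s1 := by rw [← hC]
      nlinarith [e1, e2, e3]
    rw [← hq1, ← hq2, ← hq3, key]
  · intro h
    have n1 : s1 ≠ 0 := hp1.ne'
    have n2 : s2 ≠ 0 := hp2.ne'
    have n3 : s3 ≠ 0 := hp3.ne'
    have key : s3 ^ 2 = s1 ^ 2 + s2 ^ 2 := by rw [hq1, hq2, hq3, h]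
    refine ⟨0, 0, -2 * s1 / (s2 * s3), 0, 2 * s2 / (s1 * s3), ?_, ?_, ?_⟩
    · rw [k1]
      match_scalars <;> field_simp
      all_goals try ring
      all_goals linear_combination key
    · rw [k2]
      match_scalars <;> field_simp
      all_goals ring
    · rw [k3]
      match_scalars <;> field_simp
      all_goals ring
end

section
/- Let 𝔰𝔩(2,ℝ) have basis x, y, z with [x,y] = 2z, [z,x] = 2y, [z,y] = 2x, and for λ, μ, ν > 0 let g be the positive-definite inner product with g(x,x) = λ, g(y,y) = μ, g(z,z) = ν and g(x,y) = g(x,z) = g(y,z) = 0, with orthonormal basis e₁ = x/√λ, e₂ = y/√μ, e₃ = z/√ν. Then there exist real numbers a₁₂, a₁₃, a₂₃, b₁₂, b₁₃ such that the brackets of (e₁,e₂,e₃) coincide with those of 𝔤(a₁₂,a₁₃,a₂₃,b₁₂,b₁₃) if and only if λ = μ + ν. -/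
/-!
STATEMENT 18: the diagonal Riemannian metric diag(λ,μ,ν) on 𝔰𝔩(2,ℝ) carries
left-invariant harmonic spinors precisely when λ = μ + ν.
-/

/-- Let `𝔰𝔩(2,ℝ)` have basis `x = v 0`, `y = v 1`, `z = v 2` with
`⁅x,y⁆ = 2z`, `⁅z,x⁆ = 2y`, `⁅z,y⁆ = 2x`, and for `lam, μ, ν > 0` consider the
orthonormal basis `e₁ = x/√lam`, `e₂ = y/√μ`, `e₃ = z/√ν` of the Riemannian metric
`diag(lam,μ,ν)`.  Then there exist reals `a₁₂,a₁₃,a₂₃,b₁₂,b₁₃` such that the brackets of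
`(e₁,e₂,e₃)` coincide with those of `𝔤(a₁₂,a₁₃,a₂₃,b₁₂,b₁₃)` if and only if
`lam = μ + ν`. -/
theorem sl2_riemannian_harmonic_iff
    {𝔤 : Type} [LieRing 𝔤] [LieAlgebra ℝ 𝔤]
    (v : Module.Basis (Fin 3) ℝ 𝔤)
    (hxy : ⁅v 0, v 1⁆ = (2 : ℝ) • v 2)
    (hzx : ⁅v 2, v 0⁆ = (2 : ℝ) • v 1)
    (hzy : ⁅v 2, v 1⁆ = (2 : ℝ) • v 0)
    (lam μ ν : ℝ) (hlam : 0 < lam) (hμ : 0 < μ) (hν : 0 < ν) :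
    (∃ a₁₂ a₁₃ a₂₃ b₁₂ b₁₃ : ℝ,
        ⁅(Real.sqrt lam)⁻¹ • v 0, (Real.sqrt μ)⁻¹ • v 1⁆ =
            -a₁₂ • ((Real.sqrt lam)⁻¹ • v 0) - b₁₂ • ((Real.sqrt μ)⁻¹ • v 1) +
              (a₂₃ - b₁₃) • ((Real.sqrt ν)⁻¹ • v 2) ∧
          ⁅(Real.sqrt lam)⁻¹ • v 0, (Real.sqrt ν)⁻¹ • v 2⁆ =
            -a₁₃ • ((Real.sqrt lam)⁻¹ • v 0) - b₁₃ • ((Real.sqrt μ)⁻¹ • v 1) +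
              b₁₂ • ((Real.sqrt ν)⁻¹ • v 2) ∧
          ⁅(Real.sqrt μ)⁻¹ • v 1, (Real.sqrt ν)⁻¹ • v 2⁆ =
            -a₂₃ • ((Real.sqrt lam)⁻¹ • v 0) + a₁₃ • ((Real.sqrt μ)⁻¹ • v 1) -
              a₁₂ • ((Real.sqrt ν)⁻¹ • v 2)) ↔
      lam = μ + ν := by
  set s := Real.sqrt lam with hs
  set t := Real.sqrt μ with ht
  set u := Real.sqrt ν with hu
  have hs0 : s ≠ 0 := ne_of_gt (Real.sqrt_pos.2 hlam)
  have ht0 : t ≠ 0 := ne_of_gt (Real.sqrt_pos.2 hμ)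
  have hu0 : u ≠ 0 := ne_of_gt (Real.sqrt_pos.2 hν)
  have hs2 : s ^ 2 = lam := Real.sq_sqrt hlam.le
  have ht2 : t ^ 2 = μ := Real.sq_sqrt hμ.le
  have hu2 : u ^ 2 = ν := Real.sq_sqrt hν.le
  have hxz : ⁅v 0, v 2⁆ = (-2 : ℝ) • v 1 := by
    rw [← lie_skew, hzx]; module
  have hyz : ⁅v 1, v 2⁆ = (-2 : ℝ) • v 0 := by
    rw [← lie_skew, hzy]; module
  constructor
  · rintro ⟨a₁₂, a₁₃, a₂₃, b₁₂, b₁₃, h1, h2, h3⟩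
    rw [smul_lie, lie_smul, hxy] at h1
    rw [smul_lie, lie_smul, hxz] at h2
    rw [smul_lie, lie_smul, hyz] at h3
    have e1 := congrArg (fun w => v.repr w 2) h1
    have e2 := congrArg (fun w => v.repr w 1) h2
    have e3 := congrArg (fun w => v.repr w 0) h3
    simp only [map_add, map_sub, map_neg, map_smul, Module.Basis.repr_self,
      Finsupp.smul_apply, Finsupp.add_apply, Finsupp.sub_apply, Finsupp.neg_apply,
      Finsupp.single_apply, smul_eq_mul] at e1 e2 e3
    norm_num [Fin.ext_iff] at e1 e2 e3
    -- e1 : s⁻¹ * (t⁻¹ * 2) = (a₂₃ - b₁₃) * u⁻¹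
    -- e2 : s⁻¹ * (u⁻¹ * -2) = -(b₁₃ * t⁻¹)
    -- e3 : t⁻¹ * (u⁻¹ * -2) = -(a₂₃ * s⁻¹)
    have hb : b₁₃ = 2 * t / (s * u) := by
      field_simp at e2 ⊢; linear_combination -e2
    have ha : a₂₃ = 2 * s / (t * u) := by
      field_simp at e3 ⊢; linear_combination -e3
    rw [hb, ha] at e1
    field_simp at e1
    have hstu : (2 * s * t * u : ℝ) ≠ 0 := by positivity
    have key : (2 * s * t * u) * (t ^ 2 + u ^ 2) = (2 * s * t * u) * (s ^ 2) := by
      linear_combination (2 * s * t * u) * e1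
    have key2 := mul_left_cancel₀ hstu key
    rw [← hs2, ← ht2, ← hu2]; linarith [key2]
  · intro hl
    have key : s ^ 2 = t ^ 2 + u ^ 2 := by rw [hs2, ht2, hu2]; exact hl
    refine ⟨0, 0, 2 * s / (t * u), 0, 2 * t / (s * u), ?_, ?_, ?_⟩
    · rw [smul_lie, lie_smul, hxy]
      match_scalars <;> field_simp
      linear_combination -key
      all_goals ring
    · rw [smul_lie, lie_smul, hxz]
      match_scalars <;> field_simp <;> ring
    · rw [smul_lie, lie_smul, hyz]
      match_scalars <;> field_simp <;> ring
end
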